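/- arXiv:2604.16660 — 4 statements merged into one kernel-verified Lean document; each statement's English description precedes it below -/
import Mathlib

section
/- Let i : ℕ → ℕ (indexed from 1) be an infinite sequence of vertices, let S_∞ := {v ∈ ℕ : {n : i_n = v} is infinite}, and let C_LF(μ_i) ⊆ LF be the set of locally finite quivers Q for which the sequence n ↦ μ_{i_n} ∘ ⋯ ∘ μ_{i_1}(Q) converges in the space LF, with D_LF(μ_i) its complement in LF. If S_∞ is nonempty, then C_LF(μ_i) is not dense in LF. If moreover S_∞ is infinite, then D_LF(μ_i) is dense in LF. -/
-- Mutation of a quiver at a vertex `x`.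
open Classical in
noncomputable def mutateFun {X : Type*} (x : X) (Q : X → X → ℤ) : X → X → ℤ :=
  fun v w =>
    if v = x ∨ w = x then - Q v w
    else Q v w + Q v x * max (Q x w) 0 + max (- Q v x) 0 * Q x w

-- Restriction of a quiver to a set of vertices `V`.
open Classical in
noncomputable def restrictFun {X : Type*} (V : Set X) (Q : X → X → ℤ) : X → X → ℤ :=
  fun a b => if a ∈ V ∧ b ∈ V then Q a b else 0

-- Overfill of a quiver on a set of vertices `V`.
open Classical in
noncomputable def overfillFun {X : Type*} (V : Set X) (Q : X → X → ℤ) : X → X → ℤ :=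
  fun a b => if a ∈ V ∨ b ∈ V then Q a b else 0

/-- The set of arrow finite quivers on `X`: skew-symmetric integer matrices. -/
def AF (X : Type*) : Type _ := {Q : X → X → ℤ // ∀ a b, Q a b = - Q b a}

/-- The basic set `U_{Q,V}`. -/
def Uset {X : Type*} (Q : AF X) (V : Set X) : Set (AF X) :=
  {Q' | restrictFun V Q'.1 = restrictFun V Q.1}

/-- The basic set `W_{Q,V}`. -/
def Wset {X : Type*} (Q : AF X) (V : Set X) : Set (AF X) :=
  {Q' | overfillFun V Q'.1 = overfillFun V Q.1}

def UBasis (X : Type*) : Set (Set (AF X)) :=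
  {U | ∃ (Q : AF X) (V : Set X), V.Finite ∧ U = Uset Q V}

def WBasis (X : Type*) : Set (Set (AF X)) :=
  {U | ∃ (Q : AF X) (V : Set X), V.Finite ∧ U = Wset Q V}

/-- The weak topology on `AF X`, generated by the sets `U_{Q,V}` with `V` finite. -/
def weakTop (X : Type*) : TopologicalSpace (AF X) :=
  TopologicalSpace.generateFrom (UBasis X)

/-- The strong topology on `AF X`, generated by the sets `W_{Q,V}` with `V` finite. -/
def strongTop (X : Type*) : TopologicalSpace (AF X) :=
  TopologicalSpace.generateFrom (WBasis X)

/-- Locally finite quivers. -/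
def LFset (X : Type*) : Set (AF X) := {Q | ∀ x : X, {y : X | Q.1 x y ≠ 0}.Finite}

/-- Finite quivers: those with finite support. -/
def FinSet (X : Type*) : Set (AF X) := {Q | {x : X | ∃ y, Q.1 x y ≠ 0}.Finite}

/-- Mutation as a map `AF X → AF X`. -/
noncomputable def AF.mut {X : Type*} (x : X) (Q : AF X) : AF X :=
  ⟨mutateFun x Q.1, by
    intro a b
    have h := Q.2
    simp only [mutateFun]
    by_cases ha : a = x
    · rw [if_pos (Or.inl ha), if_pos (Or.inr ha), h a b]
    · by_cases hb : b = x
      · rw [if_pos (Or.inr hb), if_pos (Or.inl hb), h a b]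
      · rw [if_neg (fun hc => hc.elim ha hb), if_neg (fun hc => hc.elim hb ha),
          h b a, h b x, h x a]
        simp only [neg_neg]
        ring⟩

/-- `mutUpTo i Q n = μ_{i n} ∘ ⋯ ∘ μ_{i 1} (Q)` (the sequence `i` is indexed from 1). -/
noncomputable def mutUpTo {X : Type*} (i : ℕ → X) (Q : AF X) : ℕ → AF X
  | 0 => Q
  | n + 1 => AF.mut (i (n + 1)) (mutUpTo i Q n)

/-- The space `LF`: locally finite quivers on `ℕ` as a subtype of `AF ℕ`. -/
abbrev LFsub := {Q : AF ℕ // Q ∈ LFset ℕ}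

/-- The topology on `LF`: subspace topology inherited from the strong topology. -/
def LFtop : TopologicalSpace LFsub :=
  TopologicalSpace.induced (Subtype.val : LFsub → AF ℕ) (strongTop ℕ)

/-- The domain of convergence in `LF` of the infinite mutation sequence `μ_i`:
locally finite quivers whose mutation sequence converges in the strong topology to a
locally finite limit (equivalently, converges in the subspace `LF`). -/
def CLF (i : ℕ → ℕ) : Set LFsub :=
  {Q | ∃ L ∈ LFset ℕ,
    Filter.Tendsto (fun n => mutUpTo i Q.1 n) Filter.atTop (@nhds _ (strongTop ℕ) L)}

/-!
If the only arrows at `v` and `w` are those between them, no mutation creates an arrow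
leaving `{v, w}`, and each mutation negates or keeps the entry `Q v w`. So when `v` is mutated
infinitely often this nonzero entry changes sign infinitely often, while convergence in the
strong topology forces every entry to stabilise. The condition only involves arrows at `v`
and `w`, so it holds on a whole open set `W_{Q,{v,w}}`, e.g. around a single arrow between
`v` and `v + 1`. When infinitely many vertices are mutated infinitely often, each basic open
set `W_{P,V}` contains such a quiver: keep `P` on the arrows at `V` and replace the rest by
one arrow between two such vertices that lie outside `V` and are not adjacent to it.
-/

open Filter Topology

section Isolation

variable {X : Type*}

def IsIsolated (Q : X → X → ℤ) (s : Set X) : Prop :=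
  ∀ a ∈ s, ∀ b ∉ s, Q a b = 0

variable {Q : X → X → ℤ} {s : Set X}

lemma mutateFun_apply_of_left_eq {x a : X} (ha : a = x) (b : X) :
    mutateFun x Q a b = -Q a b :=
  if_pos (Or.inl ha)

lemma mutateFun_apply_of_right_eq {x b : X} (a : X) (hb : b = x) :
    mutateFun x Q a b = -Q a b :=
  if_pos (Or.inr hb)

lemma IsIsolated.mutateFun_apply_of_notMem (h : IsIsolated Q s) {x a : X} (hx : x ∉ s)
    (ha : a ∈ s) (b : X) : mutateFun x Q a b = Q a b := by
  have hax : Q a x = 0 := h a ha x hx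
  unfold mutateFun
  split_ifs with hab
  · rcases hab with rfl | rfl
    · exact absurd ha hx
    · simp [hax]
  · simp [hax]

lemma IsIsolated.mutate (h : IsIsolated Q s) (x : X) : IsIsolated (mutateFun x Q) s := by
  intro a ha b hb
  by_cases hx : x ∈ s
  · have hxb : Q x b = 0 := h x hx b hb
    unfold mutateFun
    split_ifs <;> simp [h a ha b hb, hxb]
  · rw [h.mutateFun_apply_of_notMem hx ha, h a ha b hb]

lemma IsIsolated.abs_mutateFun_apply {v w : X} (h : IsIsolated Q {v, w}) (x : X) :
    |mutateFun x Q v w| = |Q v w| := by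
  by_cases hx : x = v
  · rw [mutateFun_apply_of_left_eq hx.symm, abs_neg]
  by_cases hx' : x = w
  · rw [mutateFun_apply_of_right_eq v hx'.symm, abs_neg]
  rw [h.mutateFun_apply_of_notMem (by simp [hx, hx']) (by simp)]

end Isolation

section Sequence

variable {X : Type*} {i : ℕ → X} {Q : AF X}

lemma mutUpTo_succ_val (n : ℕ) :
    (mutUpTo i Q (n + 1)).1 = mutateFun (i (n + 1)) (mutUpTo i Q n).1 :=
  rfl

lemma isIsolated_mutUpTo {s : Set X} (h : IsIsolated Q.1 s) (n : ℕ) :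
    IsIsolated (mutUpTo i Q n).1 s := by
  induction n with
  | zero => exact h
  | succ n ih => rw [mutUpTo_succ_val]; exact ih.mutate _

lemma IsIsolated.abs_mutUpTo_apply {v w : X} (h : IsIsolated Q.1 {v, w}) (n : ℕ) :
    |(mutUpTo i Q n).1 v w| = |Q.1 v w| := by
  induction n with
  | zero => rfl
  | succ n ih => rw [mutUpTo_succ_val, (isIsolated_mutUpTo h n).abs_mutateFun_apply, ih]

end Sequence

section StrongTopology

variable {X : Type*} {Q Q' : AF X} {V : Set X}

lemma Wset_self (Q : AF X) (V : Set X) : Q ∈ Wset Q V := rfl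

lemma isOpen_Wset (Q : AF X) (hV : V.Finite) : IsOpen[strongTop X] (Wset Q V) :=
  TopologicalSpace.isOpen_generateFrom_of_mem ⟨Q, V, hV, rfl⟩

lemma apply_eq_of_mem_Wset (h : Q' ∈ Wset Q V) {a b : X} (hab : a ∈ V ∨ b ∈ V) :
    Q'.1 a b = Q.1 a b := by
  simpa only [overfillFun, if_pos hab] using congrFun (congrFun h a) b

lemma Wset_subset_of_mem (h : Q' ∈ Wset Q V) : Wset Q' V ⊆ Wset Q V :=
  fun _ h' => h'.trans h

lemma Wset_anti (Q : AF X) {V V' : Set X} (hV : V ⊆ V') : Wset Q V' ⊆ Wset Q V := by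
  intro Q' h
  funext a b
  unfold overfillFun
  split_ifs with hab
  · exact apply_eq_of_mem_Wset h (hab.imp (@hV a) (@hV b))
  · rfl

lemma IsIsolated.of_mem_Wset {s : Set X} (hQ : IsIsolated Q.1 s) (h : Q' ∈ Wset Q s) :
    IsIsolated Q'.1 s := fun a ha b hb => by
  rw [apply_eq_of_mem_Wset h (Or.inl ha)]; exact hQ a ha b hb

lemma exists_finite_Wset_subset {u : Set (AF X)} (hu : IsOpen[strongTop X] u) (hQ : Q ∈ u) :
    ∃ V : Set X, V.Finite ∧ Wset Q V ⊆ u := by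
  induction hu generalizing Q with
  | basic s hs =>
    obtain ⟨Q₀, V, hV, rfl⟩ := hs
    exact ⟨V, hV, Wset_subset_of_mem hQ⟩
  | univ => exact ⟨∅, Set.finite_empty, Set.subset_univ _⟩
  | inter u₁ u₂ _ _ ih₁ ih₂ =>
    obtain ⟨V₁, hV₁, hsub₁⟩ := ih₁ hQ.1
    obtain ⟨V₂, hV₂, hsub₂⟩ := ih₂ hQ.2
    exact ⟨V₁ ∪ V₂, hV₁.union hV₂, fun Q' h =>
      ⟨hsub₁ (Wset_anti Q Set.subset_union_left h),
        hsub₂ (Wset_anti Q Set.subset_union_right h)⟩⟩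
  | sUnion S _ ih =>
    obtain ⟨t, htS, hQt⟩ := hQ
    obtain ⟨V, hV, hsub⟩ := ih t htS hQt
    exact ⟨V, hV, hsub.trans (Set.subset_sUnion_of_mem htS)⟩

lemma eventually_apply_eq_of_tendsto {f : ℕ → AF X} {L : AF X}
    (hf : Tendsto f atTop (@nhds _ (strongTop X) L)) (a b : X) :
    ∀ᶠ n in atTop, (f n).1 a b = L.1 a b :=
  (hf.eventually_mem (@IsOpen.mem_nhds _ (strongTop X) _ _
    (isOpen_Wset L (Set.finite_singleton a)) (Wset_self L _))).mono
    fun _ h => apply_eq_of_mem_Wset h (Or.inl rfl)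

end StrongTopology

theorem not_tendsto_mutUpTo {X : Type*} {i : ℕ → X} {v w : X}
    (hv : {n : ℕ | 1 ≤ n ∧ i n = v}.Infinite) {Q : AF X} (hQ : IsIsolated Q.1 {v, w})
    (hvw : Q.1 v w ≠ 0) (L : AF X) :
    ¬ Tendsto (mutUpTo i Q) atTop (@nhds _ (strongTop X) L) := by
  intro hL
  obtain ⟨N, hN⟩ := eventually_atTop.1 (eventually_apply_eq_of_tendsto hL v w)
  obtain ⟨_ | k, ⟨-, hkv⟩, hNk⟩ := hv.exists_gt N
  · omega
  have hflip : (mutUpTo i Q (k + 1)).1 v w = -(mutUpTo i Q k).1 v w := by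
    rw [mutUpTo_succ_val, mutateFun_apply_of_left_eq hkv.symm]
  have hzero : (mutUpTo i Q k).1 v w = 0 := by
    have := hN (k + 1) (by omega)
    have := hN k (by omega)
    omega
  apply hvw
  rw [← abs_eq_zero, ← hQ.abs_mutUpTo_apply k, hzero, abs_zero]

section Constructions

variable {X : Type*}

def AF.edge [DecidableEq X] (v w : X) : AF X :=
  ⟨fun a b => (if a = v ∧ b = w then 1 else 0) - (if a = w ∧ b = v then 1 else 0), by
    intro a b
    dsimp only
    grind⟩

lemma AF.edge_apply_self [DecidableEq X] {v w : X} (h : v ≠ w) :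
    (AF.edge v w).1 v w = 1 := by
  simp [AF.edge, h]

lemma isIsolated_edge [DecidableEq X] (v w : X) : IsIsolated (AF.edge v w).1 {v, w} := by
  intro a _ b hb
  simp only [Set.mem_insert_iff, Set.mem_singleton_iff, not_or] at hb
  simp [AF.edge, hb.1, hb.2]

lemma AF.edge_mem_LFset [DecidableEq X] (v w : X) : AF.edge v w ∈ LFset X := fun x =>
  ((Set.finite_singleton w).insert v).subset fun y hy => by
    by_contra hvw
    simp only [Set.mem_insert_iff, Set.mem_singleton_iff, not_or] at hvw
    exact hy (by simp [AF.edge, hvw.1, hvw.2])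

open Classical in
noncomputable def AF.piecewise (V : Set X) (P R : AF X) : AF X :=
  ⟨fun a b => if a ∈ V ∨ b ∈ V then P.1 a b else R.1 a b, fun a b => by
    simp only [or_comm (a := b ∈ V)]
    split_ifs
    exacts [P.2 a b, R.2 a b]⟩

variable {V : Set X} {P R : AF X}

lemma AF.piecewise_apply_of_notMem {a b : X} (ha : a ∉ V) (hb : b ∉ V) :
    (AF.piecewise V P R).1 a b = R.1 a b := by
  simp [AF.piecewise, ha, hb]

lemma AF.piecewise_mem_Wset : AF.piecewise V P R ∈ Wset P V := by
  funext a b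
  simp only [overfillFun, AF.piecewise]
  split_ifs <;> rfl

lemma AF.piecewise_mem_LFset (hP : P ∈ LFset X) (hR : R ∈ LFset X) :
    AF.piecewise V P R ∈ LFset X := fun x =>
  ((hP x).union (hR x)).subset fun y hy => by
    by_cases hxy : x ∈ V ∨ y ∈ V
    · exact Or.inl (by simpa [AF.piecewise, hxy] using hy)
    · exact Or.inr (by simpa [AF.piecewise, hxy] using hy)

lemma IsIsolated.piecewise {s : Set X} (hR : IsIsolated R.1 s) (hsV : Disjoint s V)
    (hP : ∀ a ∈ V, ∀ b ∈ s, P.1 a b = 0) : IsIsolated (AF.piecewise V P R).1 s := by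
  intro a ha b hb
  simp only [AF.piecewise]
  split_ifs with hab
  · have hbV : b ∈ V := hab.resolve_left (hsV.notMem_of_mem_left ha)
    rw [P.2, hP b hbV a ha, neg_zero]
  · exact hR a ha b hb

end Constructions

lemma exists_isIsolated_mem_Wset {X : Type*} {P : AF X} (hP : P ∈ LFset X)
    {V : Set X} (hV : V.Finite) {S : Set X} (hS : S.Infinite) :
    ∃ v ∈ S, ∃ w, ∃ Q ∈ Wset P V ∩ LFset X,
      IsIsolated Q.1 {v, w} ∧ Q.1 v w ≠ 0 := by
  classical
  have hT : {y | y ∈ V ∨ ∃ a ∈ V, P.1 a y ≠ 0}.Finite :=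
    (hV.union (hV.biUnion fun a _ => hP a)).subset fun y hy => by simpa using hy
  obtain ⟨v, ⟨hvS, hvT⟩, w, ⟨-, hwT⟩, hvw⟩ := (hS.sdiff hT).nontrivial
  simp only [Set.mem_ofPred_eq, not_or, not_exists, not_and, not_not] at hvT hwT
  refine ⟨v, hvS, w, AF.piecewise V P (AF.edge v w),
    ⟨AF.piecewise_mem_Wset, AF.piecewise_mem_LFset hP (AF.edge_mem_LFset v w)⟩,
    (isIsolated_edge v w).piecewise ?_ ?_, ?_⟩
  · simp [Set.disjoint_insert_left, hvT.1, hwT.1]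
  · rintro a ha b (rfl | rfl)
    exacts [hvT.2 a ha, hwT.2 a ha]
  · rw [AF.piecewise_apply_of_notMem hvT.1 hwT.1, AF.edge_apply_self hvw]
    exact one_ne_zero

/-- If some vertex occurs infinitely often in `i`, the domain of convergence is not dense
in `LF`; if infinitely many vertices occur infinitely often, the domain of divergence is
dense in `LF`. -/
theorem lf_infinite_mutation_sequences (i : ℕ → ℕ) :
    ({v : ℕ | {n : ℕ | 1 ≤ n ∧ i n = v}.Infinite}.Nonempty →
      ¬ @Dense _ LFtop (CLF i)) ∧
    ({v : ℕ | {n : ℕ | 1 ≤ n ∧ i n = v}.Infinite}.Infinite →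
      @Dense _ LFtop (CLF i)ᶜ) := by
  let _ : TopologicalSpace LFsub := LFtop
  refine ⟨fun ⟨v, hv⟩ hdense => ?_, fun hS => dense_iff_inter_open.2 ?_⟩
  · set E := AF.edge v (v + 1)
    have hE : IsOpen (Subtype.val ⁻¹' Wset E {v, v + 1} : Set LFsub) :=
      ⟨_, isOpen_Wset E (Set.toFinite _), rfl⟩
    obtain ⟨Q, hQE, L, -, hL⟩ :=
      hdense.inter_open_nonempty _ hE ⟨⟨E, AF.edge_mem_LFset _ _⟩, Wset_self E _⟩
    refine not_tendsto_mutUpTo hv ((isIsolated_edge _ _).of_mem_Wset hQE) ?_ L hL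
    rw [apply_eq_of_mem_Wset hQE (Or.inl (Set.mem_insert _ _)), AF.edge_apply_self (by omega)]
    exact one_ne_zero
  · rintro _ ⟨u, hu, rfl⟩ ⟨P, hPu⟩
    obtain ⟨V, hV, hVu⟩ := exists_finite_Wset_subset hu hPu
    obtain ⟨v, hv, w, Q, ⟨hQV, hQ⟩, hiso, hvw⟩ := exists_isIsolated_mem_Wset P.2 hV hS
    exact ⟨⟨Q, hQ⟩, hVu hQV, fun ⟨L, _, hL⟩ => not_tendsto_mutUpTo hv hiso hvw L hL⟩
end

section
/- Let K ∈ AF^ℕ be homogeneous, and suppose the age of K is closed under mutation: for every finite V ⊆ ℕ and every x ∈ V, the finite quiver μ_x(ρ_V(K)) embeds into K, i.e., there is an injection f : V → ℕ with K(f a, f b) = μ_x(ρ_V(K))(a, b) for all a, b ∈ V. Then for every x ∈ ℕ, the quiver μ_x(K) is isomorphic to K; consequently, for every finite sequence x_1, …, x_k ∈ ℕ, the quiver μ_{x_k} ∘ ⋯ ∘ μ_{x_1}(K) is isomorphic to K, so the mutation-equivalence class of K consists of a single quiver up to isomorphism. -/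
/-- Restriction as a map `AF X → AF X`. -/
noncomputable def AF.restrict {X : Type*} (V : Set X) (Q : AF X) : AF X :=
  ⟨restrictFun V Q.1, by
    intro a b
    simp only [restrictFun]
    by_cases hab : a ∈ V ∧ b ∈ V
    · rw [if_pos hab, if_pos ⟨hab.2, hab.1⟩, Q.2 a b]
    · rw [if_neg hab, if_neg (fun hc => hab ⟨hc.2, hc.1⟩), neg_zero]⟩

/-- Apply a finite sequence of mutations, leftmost entry first:
`mutList Q [x₁, …, x_k] = μ_{x_k} ∘ ⋯ ∘ μ_{x_1} (Q)`. -/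
noncomputable def mutList {X : Type*} (Q : AF X) (l : List X) : AF X :=
  l.foldl (fun R x => AF.mut x R) Q

/-- Two quivers on `X` are isomorphic if a relabeling of vertices carries one to the other. -/
def IsoAF {X : Type*} (Q Q' : AF X) : Prop :=
  ∃ f : X ≃ X, ∀ a b, Q'.1 (f a) (f b) = Q.1 a b

/-- A quiver on `ℕ` is homogeneous if every isomorphism between finite full subquivers
extends to an automorphism. -/
def Homog (Q : AF ℕ) : Prop :=
  ∀ (A B : Set ℕ), A.Finite → B.Finite → ∀ f : ℕ → ℕ, Set.BijOn f A B →
    (∀ a ∈ A, ∀ a' ∈ A, Q.1 (f a) (f a') = Q.1 a a') →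
    ∃ F : ℕ ≃ ℕ, (∀ a ∈ A, F a = f a) ∧ ∀ x y, Q.1 (F x) (F y) = Q.1 x y

-- ===================== auxiliary lemmas =====================

lemma max_sub_max (t : ℤ) : max t 0 - max (-t) 0 = t := by
  rcases le_total 0 t with h | h
  · rw [max_eq_left h, max_eq_right (neg_nonpos.mpr h)]; ring
  · rw [max_eq_right h, max_eq_left (neg_nonneg.mpr h)]; ring

lemma mut_key (p q r : ℤ) :
    (p + q * max r 0 + max (-q) 0 * r) + (-q) * max (-r) 0 + max q 0 * (-r) = p := by
  have h1 := max_sub_max r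
  have h2 := max_sub_max q
  linear_combination q * h1 - r * h2

lemma mut_restrict_eq {x a b : ℕ} {V : Set ℕ} (Q : ℕ → ℕ → ℤ)
    (hx : x ∈ V) (ha : a ∈ V) (hb : b ∈ V) :
    mutateFun x (restrictFun V Q) a b = mutateFun x Q a b := by
  simp only [mutateFun, restrictFun]
  by_cases h : a = x ∨ b = x
  · rw [if_pos h, if_pos h, if_pos ⟨ha, hb⟩]
  · rw [if_neg h, if_neg h, if_pos ⟨ha, hb⟩, if_pos ⟨ha, hx⟩, if_pos ⟨hx, hb⟩]

lemma mutateFun_left {X : Type*} (x : X) (Q : X → X → ℤ) (b : X) :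
    mutateFun x Q x b = - Q x b := by simp [mutateFun]

lemma mutateFun_right {X : Type*} (x : X) (Q : X → X → ℤ) (a : X) :
    mutateFun x Q a x = - Q a x := by simp [mutateFun]

lemma mutateFun_ne {X : Type*} (x : X) (Q : X → X → ℤ) {a b : X}
    (ha : a ≠ x) (hb : b ≠ x) :
    mutateFun x Q a b = Q a b + Q a x * max (Q x b) 0 + max (- Q a x) 0 * Q x b := by
  simp only [mutateFun]
  rw [if_neg (by tauto)]

lemma comp2 (K : ℕ → ℕ → ℤ) (x c a y d e : ℕ)
    (hcx : c ≠ x) (hax : a ≠ x) (hdy : d ≠ y) (hey : e ≠ y)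
    (h1 : K c a = mutateFun y K d e) (h2 : K c x = - K d y) (h3 : K x a = - K y e) :
    mutateFun x K c a = K d e := by
  rw [mutateFun_ne x K hcx hax, h1, mutateFun_ne y K hdy hey, h2, h3]
  simp only [neg_neg]
  exact mut_key _ _ _

lemma AF.diag {X : Type*} (Q : AF X) (a : X) : Q.1 a a = 0 := by
  have := Q.2 a a; omega

/-- Invariant for the back-and-forth construction. -/
def Good (K : AF ℕ) (x : ℕ) (A : Finset ℕ) (f : ℕ → ℕ) : Prop :=
  x ∈ A ∧ Set.InjOn f ↑A ∧ ∀ a ∈ A, ∀ b ∈ A, K.1 (f a) (f b) = mutateFun x K.1 a b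

lemma forth (K : AF ℕ) (hK : Homog K)
    (hage : ∀ V : Set ℕ, V.Finite → ∀ x ∈ V,
      ∃ f : ℕ → ℕ, Set.InjOn f V ∧
        ∀ a ∈ V, ∀ b ∈ V, K.1 (f a) (f b) = (AF.mut x (AF.restrict V K)).1 a b)
    (x : ℕ) (A : Finset ℕ) (f : ℕ → ℕ) (h : Good K x A f) (c : ℕ) :
    ∃ f' : ℕ → ℕ, (∀ a ∈ A, f' a = f a) ∧ Good K x (insert c A) f' := by
  classical
  obtain ⟨hx, hinj, hemb⟩ := h
  set V : Finset ℕ := insert c A with hV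
  have hxV : x ∈ V := Finset.mem_insert_of_mem hx
  obtain ⟨g, hginj, hg⟩ := hage ↑V V.finite_toSet x (Finset.mem_coe.mpr hxV)
  have hg' : ∀ a ∈ V, ∀ b ∈ V, K.1 (g a) (g b) = mutateFun x K.1 a b := by
    intro a ha b hb
    have := hg a (Finset.mem_coe.mpr ha) b (Finset.mem_coe.mpr hb)
    rw [this]
    exact mut_restrict_eq K.1 (Finset.mem_coe.mpr hxV) (Finset.mem_coe.mpr ha)
      (Finset.mem_coe.mpr hb)
  have hAV : (↑A : Set ℕ) ⊆ ↑V := by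
    intro a ha; exact Finset.mem_coe.mpr (Finset.mem_insert_of_mem (Finset.mem_coe.mp ha))
  have hginjA : Set.InjOn g ↑A := hginj.mono hAV
  set φ : ℕ → ℕ := fun u => f (Function.invFunOn g ↑A u) with hφ
  have hφg : ∀ a ∈ A, φ (g a) = f a := by
    intro a ha
    have : Function.invFunOn g ↑A (g a) = a := hginjA.leftInvOn_invFunOn (Finset.mem_coe.mpr ha)
    simp [hφ, this]
  have hbij : Set.BijOn φ (g '' ↑A) (f '' ↑A) := by
    refine ⟨?_, ?_, ?_⟩
    · rintro u ⟨a, ha, rfl⟩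
      exact ⟨a, ha, (hφg a ha).symm⟩
    · rintro u ⟨a, ha, rfl⟩ u' ⟨a', ha', rfl⟩ he
      rw [hφg a ha, hφg a' ha'] at he
      exact congrArg g (hinj ha ha' he)
    · rintro u ⟨a, ha, rfl⟩
      exact ⟨g a, ⟨a, ha, rfl⟩, hφg a ha⟩
  have hpres : ∀ u ∈ g '' (↑A : Set ℕ), ∀ u' ∈ g '' (↑A : Set ℕ), K.1 (φ u) (φ u') = K.1 u u' := by
    rintro u ⟨a, ha, rfl⟩ u' ⟨a', ha', rfl⟩
    rw [hφg a ha, hφg a' ha', hemb a ha a' ha',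
      hg' a (Finset.mem_insert_of_mem ha) a' (Finset.mem_insert_of_mem ha')]
  obtain ⟨F, hF1, hF2⟩ := hK (g '' ↑A) (f '' ↑A) ((A.finite_toSet).image g)
    ((A.finite_toSet).image f) φ hbij hpres
  refine ⟨fun b => F (g b), ?_, Finset.mem_insert_of_mem hx, ?_, ?_⟩
  · intro a ha
    show F (g a) = f a
    rw [hF1 (g a) ⟨a, ha, rfl⟩, hφg a ha]
  · intro a ha b hb he
    exact hginj ha hb (F.injective he)
  · intro a ha b hb
    rw [hF2 (g a) (g b), hg' a ha b hb]

lemma back (K : AF ℕ) (hK : Homog K)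
    (hage : ∀ V : Set ℕ, V.Finite → ∀ x ∈ V,
      ∃ f : ℕ → ℕ, Set.InjOn f V ∧
        ∀ a ∈ V, ∀ b ∈ V, K.1 (f a) (f b) = (AF.mut x (AF.restrict V K)).1 a b)
    (x : ℕ) (A : Finset ℕ) (f : ℕ → ℕ) (h : Good K x A f) (d : ℕ) :
    ∃ c : ℕ, ∃ f' : ℕ → ℕ, (∀ a ∈ A, f' a = f a) ∧ f' c = d ∧ Good K x (insert c A) f' := by
  classical
  obtain ⟨hx, hinj, hemb⟩ := h
  by_cases hd : ∃ a ∈ A, f a = d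
  · obtain ⟨c, hc, hfc⟩ := hd
    refine ⟨c, f, fun a _ => rfl, hfc, ?_⟩
    rw [Finset.insert_eq_self.mpr hc]
    exact ⟨hx, hinj, hemb⟩
  push_neg at hd
  set W : Finset ℕ := insert d (A.image f) with hW
  have hfxW : f x ∈ W := Finset.mem_insert_of_mem (Finset.mem_image_of_mem f hx)
  obtain ⟨g, hginj, hg⟩ := hage ↑W W.finite_toSet (f x) (Finset.mem_coe.mpr hfxW)
  have hg' : ∀ u ∈ W, ∀ v ∈ W, K.1 (g u) (g v) = mutateFun (f x) K.1 u v := by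
    intro u hu v hv
    rw [hg u (Finset.mem_coe.mpr hu) v (Finset.mem_coe.mpr hv)]
    exact mut_restrict_eq K.1 (Finset.mem_coe.mpr hfxW) (Finset.mem_coe.mpr hu)
      (Finset.mem_coe.mpr hv)
  have hfaW : ∀ a ∈ A, f a ∈ W := fun a ha =>
    Finset.mem_insert_of_mem (Finset.mem_image_of_mem f ha)
  have hdW : d ∈ W := Finset.mem_insert_self _ _
  -- `g ∘ f` embeds `K|A` into `K`
  have hGF : ∀ a ∈ A, ∀ b ∈ A, K.1 (g (f a)) (g (f b)) = K.1 a b := by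
    intro a ha b hb
    rw [hg' (f a) (hfaW a ha) (f b) (hfaW b hb)]
    by_cases hab : a = x ∨ b = x
    · have hab' : f a = f x ∨ f b = f x := hab.imp (congrArg f) (congrArg f)
      have e1 : mutateFun (f x) K.1 (f a) (f b) = -K.1 (f a) (f b) := by
        simp only [mutateFun]; rw [if_pos hab']
      have e2 : mutateFun x K.1 a b = -K.1 a b := by
        simp only [mutateFun]; rw [if_pos hab]
      rw [e1, hemb a ha b hb, e2, neg_neg]
    · push_neg at hab
      obtain ⟨hax, hbx⟩ := hab
      have hfax : f a ≠ f x := fun e =>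
        hax (hinj (Finset.mem_coe.mpr ha) (Finset.mem_coe.mpr hx) e)
      have hfbx : f b ≠ f x := fun e =>
        hbx (hinj (Finset.mem_coe.mpr hb) (Finset.mem_coe.mpr hx) e)
      exact comp2 K.1 (f x) (f a) (f b) x a b hfax hfbx hax hbx
        (hemb a ha b hb)
        (by rw [hemb a ha x hx, mutateFun_right])
        (by rw [hemb x hx b hb, mutateFun_left])
  -- homogeneity: find an automorphism F sending g (f a) back to a
  have hgfinj : Set.InjOn (fun a => g (f a)) ↑A := by
    intro a ha b hb he
    exact hinj ha hb (hginj (Finset.mem_coe.mpr (hfaW a ha)) (Finset.mem_coe.mpr (hfaW b hb)) he)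
  set ψ : ℕ → ℕ := fun u => Function.invFunOn (fun a => g (f a)) ↑A u with hψ
  have hψg : ∀ a ∈ A, ψ (g (f a)) = a := fun a ha =>
    hgfinj.leftInvOn_invFunOn (Finset.mem_coe.mpr ha)
  have hbij : Set.BijOn ψ ((fun a => g (f a)) '' ↑A) ↑A := by
    refine ⟨?_, ?_, ?_⟩
    · rintro u ⟨a, ha, rfl⟩
      rw [hψg a ha]; exact ha
    · rintro u ⟨a, ha, rfl⟩ u' ⟨a', ha', rfl⟩ he
      rw [hψg a ha, hψg a' ha'] at he
      rw [he]
    · intro a ha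
      exact ⟨g (f a), ⟨a, ha, rfl⟩, hψg a ha⟩
  have hpres : ∀ u ∈ (fun a => g (f a)) '' (↑A : Set ℕ), ∀ u' ∈ (fun a => g (f a)) '' (↑A : Set ℕ),
      K.1 (ψ u) (ψ u') = K.1 u u' := by
    rintro u ⟨a, ha, rfl⟩ u' ⟨a', ha', rfl⟩
    rw [hψg a ha, hψg a' ha']
    exact (hGF a ha a' ha').symm
  obtain ⟨F, hF1, hF2⟩ := hK _ ↑A ((A.finite_toSet).image _) A.finite_toSet ψ hbij hpres
  have hFgf : ∀ a ∈ A, F (g (f a)) = a := fun a ha => by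
    rw [hF1 _ ⟨a, ha, rfl⟩, hψg a ha]
  set c : ℕ := F (g d) with hc
  have hcA : c ∉ A := by
    intro hcA
    have h1 : F (g (f c)) = c := hFgf c hcA
    have h2 : g (f c) = g d := F.injective (by rw [h1, hc])
    have h3 : f c = d :=
      hginj (Finset.mem_coe.mpr (hfaW c hcA)) (Finset.mem_coe.mpr hdW) h2
    exact hd c hcA h3
  have hcx : c ≠ x := fun e => hcA (by rw [e]; exact hx)
  have hKca : ∀ a ∈ A, K.1 c a = mutateFun (f x) K.1 d (f a) := by
    intro a ha
    have h1 : K.1 (F (g d)) (F (g (f a))) = K.1 (g d) (g (f a)) := hF2 _ _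
    rw [hFgf a ha, hg' d hdW (f a) (hfaW a ha)] at h1
    exact h1
  have hcxval : K.1 c x = - K.1 d (f x) := by
    rw [hKca x hx, mutateFun_right]
  set f' : ℕ → ℕ := Function.update f c d with hf'
  have hf'A : ∀ a ∈ A, f' a = f a := fun a ha =>
    Function.update_of_ne (fun e => hcA (by rw [← e]; exact ha)) _ _
  have hf'c : f' c = d := Function.update_self _ _ _
  -- the main new relation
  have main : ∀ b ∈ A, K.1 d (f b) = mutateFun x K.1 c b := by
    intro b hb
    by_cases hbx : b = x
    · subst hbx
      rw [mutateFun_right, hcxval, neg_neg]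
    · have hfbx : f b ≠ f x := fun e =>
        hbx (hinj (Finset.mem_coe.mpr hb) (Finset.mem_coe.mpr hx) e)
      have hdfx : d ≠ f x := fun e => hd x hx e.symm
      have h3 : K.1 x b = - K.1 (f x) (f b) := by
        have := hemb x hx b hb
        rw [mutateFun_left] at this
        omega
      exact (comp2 K.1 x c b (f x) d (f b) hcx hbx hdfx hfbx
        (hKca b hb) hcxval h3).symm
  refine ⟨c, f', hf'A, hf'c, Finset.mem_insert_of_mem hx, ?_, ?_⟩
  · -- injectivity
    intro a ha b hb he
    rcases Finset.mem_insert.mp (Finset.mem_coe.mp ha) with rfl | haA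
    · rcases Finset.mem_insert.mp (Finset.mem_coe.mp hb) with rfl | hbA
      · rfl
      · rw [hf'c, hf'A b hbA] at he
        exact absurd he.symm (hd b hbA)
    · rcases Finset.mem_insert.mp (Finset.mem_coe.mp hb) with rfl | hbA
      · rw [hf'c, hf'A a haA] at he
        exact absurd he (hd a haA)
      · rw [hf'A a haA, hf'A b hbA] at he
        exact hinj (Finset.mem_coe.mpr haA) (Finset.mem_coe.mpr hbA) he
  · -- embedding property
    intro a ha b hb
    rcases Finset.mem_insert.mp ha with rfl | haA
    · rcases Finset.mem_insert.mp hb with rfl | hbA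
      · rw [hf'c, AF.diag]
        exact (AF.diag (AF.mut x K) c).symm
      · rw [hf'c, hf'A b hbA]
        exact main b hbA
    · rcases Finset.mem_insert.mp hb with rfl | hbA
      · rw [hf'A a haA, hf'c]
        have s1 := K.2 (f a) d
        have s2 : mutateFun x K.1 a c = - mutateFun x K.1 c a := (AF.mut x K).2 a c
        have m := main a haA
        omega
      · rw [hf'A a haA, hf'A b hbA]
        exact hemb a haA b hbA

lemma exists_iso (K : AF ℕ) (hK : Homog K)
    (hage : ∀ V : Set ℕ, V.Finite → ∀ x ∈ V,
      ∃ f : ℕ → ℕ, Set.InjOn f V ∧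
        ∀ a ∈ V, ∀ b ∈ V, K.1 (f a) (f b) = (AF.mut x (AF.restrict V K)).1 a b)
    (x : ℕ) :
    ∃ F : ℕ ≃ ℕ, ∀ a b, K.1 (F a) (F b) = mutateFun x K.1 a b := by
  classical
  have good0 : Good K x {x} id := by
    refine ⟨Finset.mem_singleton_self x, fun a _ b _ e => e, ?_⟩
    intro a ha b hb
    rw [Finset.mem_singleton] at ha hb
    rw [ha, hb]
    show K.1 x x = mutateFun x K.1 x x
    rw [AF.diag]
    exact (AF.diag (AF.mut x K) x).symm
  have step : ∀ p : {q : Finset ℕ × (ℕ → ℕ) // Good K x q.1 q.2}, ∀ n : ℕ,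
      ∃ q : {q : Finset ℕ × (ℕ → ℕ) // Good K x q.1 q.2},
        p.1.1 ⊆ q.1.1 ∧ (∀ a ∈ p.1.1, q.1.2 a = p.1.2 a) ∧
        n ∈ q.1.1 ∧ ∃ c, c ∈ q.1.1 ∧ q.1.2 c = n := by
    rintro ⟨⟨A, f⟩, hGood⟩ n
    obtain ⟨f₁, hf₁, hGood₁⟩ := forth K hK hage x A f hGood n
    obtain ⟨c, f₂, hf₂, hf₂c, hGood₂⟩ := back K hK hage x (insert n A) f₁ hGood₁ n
    refine ⟨⟨⟨insert c (insert n A), f₂⟩, hGood₂⟩, ?_, ?_, ?_,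
      ⟨c, Finset.mem_insert_self _ _, hf₂c⟩⟩
    · intro a ha
      exact Finset.mem_insert_of_mem (Finset.mem_insert_of_mem ha)
    · intro a ha
      show f₂ a = f a
      rw [hf₂ a (Finset.mem_insert_of_mem ha), hf₁ a ha]
    · exact Finset.mem_insert_of_mem (Finset.mem_insert_self _ _)
  choose next h1 h2 h3 cfn hc1 hc2 using step
  set seq : ℕ → {q : Finset ℕ × (ℕ → ℕ) // Good K x q.1 q.2} :=
    fun n => Nat.rec ⟨({x}, id), good0⟩ (fun n p => next p n) n with hseq
  have mono : ∀ m n, m ≤ n → (seq m).1.1 ⊆ (seq n).1.1 ∧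
      ∀ a ∈ (seq m).1.1, (seq n).1.2 a = (seq m).1.2 a := by
    intro m n hmn
    induction n, hmn using Nat.le_induction with
    | base => exact ⟨fun _ h => h, fun _ _ => rfl⟩
    | succ n hmn ih =>
      refine ⟨fun a ha => h1 (seq n) n (ih.1 ha), ?_⟩
      intro a ha
      rw [show (seq (n+1)) = next (seq n) n from rfl, h2 (seq n) n a (ih.1 ha), ih.2 a ha]
  have memS : ∀ n, n ∈ (seq (n+1)).1.1 := fun n => h3 (seq n) n
  set F0 : ℕ → ℕ := fun a => (seq (a+1)).1.2 a with hF0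
  have coh : ∀ a n, a + 1 ≤ n → (seq n).1.2 a = F0 a := fun a n h =>
    (mono (a+1) n h).2 a (memS a)
  have memLe : ∀ a n, a + 1 ≤ n → a ∈ (seq n).1.1 := fun a n h => (mono (a+1) n h).1 (memS a)
  have hembF : ∀ a b, K.1 (F0 a) (F0 b) = mutateFun x K.1 a b := by
    intro a b
    set N := max (a+1) (b+1) with hN
    have ha := memLe a N (le_max_left _ _)
    have hb := memLe b N (le_max_right _ _)
    have := (seq N).2.2.2 a ha b hb
    rwa [coh a N (le_max_left _ _), coh b N (le_max_right _ _)] at this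
  have hinjF : Function.Injective F0 := by
    intro a b he
    set N := max (a+1) (b+1) with hN
    have ha := memLe a N (le_max_left _ _)
    have hb := memLe b N (le_max_right _ _)
    apply (seq N).2.2.1 (Finset.mem_coe.mpr ha) (Finset.mem_coe.mpr hb)
    rw [coh a N (le_max_left _ _), coh b N (le_max_right _ _)]
    exact he
  have hsurjF : Function.Surjective F0 := by
    intro d
    have hc : cfn (seq d) d ∈ (seq (d+1)).1.1 := hc1 (seq d) d
    have hfc : (seq (d+1)).1.2 (cfn (seq d) d) = d := hc2 (seq d) d
    set c := cfn (seq d) d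
    set N := max (c+1) (d+1) with hN
    refine ⟨c, ?_⟩
    have e1 : (seq N).1.2 c = F0 c := coh c N (le_max_left _ _)
    have e2 : (seq N).1.2 c = (seq (d+1)).1.2 c := (mono (d+1) N (le_max_right _ _)).2 c hc
    rw [← e1, e2, hfc]
  exact ⟨Equiv.ofBijective F0 ⟨hinjF, hsurjF⟩, hembF⟩

lemma mut_relabel (Q Q' : AF ℕ) (g : ℕ ≃ ℕ) (h : ∀ a b, Q'.1 (g a) (g b) = Q.1 a b)
    (y a b : ℕ) : (AF.mut (g y) Q').1 (g a) (g b) = (AF.mut y Q).1 a b := by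
  show mutateFun (g y) Q'.1 (g a) (g b) = mutateFun y Q.1 a b
  simp only [mutateFun]
  have hcond : (g a = g y ∨ g b = g y) ↔ (a = y ∨ b = y) := by
    rw [g.injective.eq_iff, g.injective.eq_iff]
  by_cases h' : a = y ∨ b = y
  · rw [if_pos (hcond.mpr h'), if_pos h', h]
  · rw [if_neg (fun hc => h' (hcond.mp hc)), if_neg h', h, h, h]

/-- If `K` is homogeneous and its age is closed under mutation, then every mutation of `K`
is isomorphic to `K`; hence the mutation class of `K` is a singleton up to isomorphism. -/
theorem fraisse_mutation_class_singleton (K : AF ℕ) (hK : Homog K)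
    (hage : ∀ V : Set ℕ, V.Finite → ∀ x ∈ V,
      ∃ f : ℕ → ℕ, Set.InjOn f V ∧
        ∀ a ∈ V, ∀ b ∈ V, K.1 (f a) (f b) = (AF.mut x (AF.restrict V K)).1 a b) :
    (∀ x : ℕ, IsoAF K (AF.mut x K)) ∧ (∀ l : List ℕ, IsoAF K (mutList K l)) := by
  have part1 : ∀ x : ℕ, IsoAF K (AF.mut x K) := by
    intro x
    obtain ⟨F, hF⟩ := exists_iso K hK hage x
    refine ⟨F.symm, fun a b => ?_⟩
    have h := hF (F.symm a) (F.symm b)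
    rw [Equiv.apply_symm_apply, Equiv.apply_symm_apply] at h
    exact h.symm
  refine ⟨part1, ?_⟩
  intro l
  induction l using List.reverseRecOn with
  | nil => exact ⟨Equiv.refl ℕ, fun a b => rfl⟩
  | append_singleton l y ih =>
    obtain ⟨f, hf⟩ := ih
    have hml : mutList K (l ++ [y]) = AF.mut y (mutList K l) := by
      simp [mutList, List.foldl_append]
    obtain ⟨g, hg⟩ := part1 (f.symm y)
    refine ⟨g.trans f, fun a b => ?_⟩
    rw [hml]
    have h1 := mut_relabel K (mutList K l) f hf (f.symm y) (g a) (g b)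
    rw [Equiv.apply_symm_apply] at h1
    show (AF.mut y (mutList K l)).1 (f (g a)) (f (g b)) = K.1 a b
    rw [h1, hg]
end

section
/- Let F ∈ AF^ℕ be homogeneous and universal, meaning every finite quiver T on {0,…,n-1} (for every n) embeds into F as a full subquiver. Then for every Q ∈ AF^ℕ there exists an infinite sequence i : ℕ → ℕ (indexed from 1) such that the sequence n ↦ μ_{i_n} ∘ ⋯ ∘ μ_{i_1}(F) converges to Q in the weak topology on AF^ℕ. -/
/-- A finite abstract quiver on `Fin n` embeds into `Q ∈ AF ℕ` as a full subquiver. -/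
def EmbedsFin {n : ℕ} (T : AF (Fin n)) (Q : AF ℕ) : Prop :=
  ∃ f : Fin n → ℕ, Function.Injective f ∧ ∀ a b, Q.1 (f a) (f b) = T.1 a b

/-!
A homogeneous universal quiver `F` has the extension property: any prescribed row of arrows
into a finite set of vertices is realised by a vertex outside it (embed the one-point
extension by universality, then move it back onto the set by homogeneity). The property
survives every mutation `μ_y`, because the row of a vertex `x ≠ y` in `μ_y R` is an
invertible function of its row in `R`.

Enumerate the pairs `(v, w)` through `Nat.pair`. At step `n`, with `d = Q(v,w) - R(v,w)`,
mutate at a vertex `x > n` whose only arrows into `{0, …, n}` are `x → v` of weight `-d`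
and `x → w` of weight `sign d`: this adds `d` to `R(v, w)` and changes no other arrow
between vertices `≤ n`. Each arrow is thus eventually correct for good, which is
convergence in the weak topology.
-/

namespace AF

variable {X : Type*}

theorem apply_self (R : AF X) (a : X) : R.1 a a = 0 := by
  have := R.2 a a
  omega

theorem mut_apply_of_ne (R : AF X) {x a b : X} (ha : a ≠ x) (hb : b ≠ x) :
    (R.mut x).1 a b = R.1 a b + R.1 a x * max (R.1 x b) 0 + max (-R.1 a x) 0 * R.1 x b := by
  simp [AF.mut, mutateFun, ha, hb]

theorem mut_apply_right (R : AF X) (x a : X) : (R.mut x).1 a x = -R.1 a x := by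
  simp [AF.mut, mutateFun]

theorem mut_apply_eq_of_row_eq_zero (R : AF X) {x a b : X} (ha : a ≠ x) (hb : b ≠ x)
    (h : R.1 x a = 0 ∨ R.1 x b = 0) : (R.mut x).1 a b = R.1 a b := by
  rw [mut_apply_of_ne R ha hb, R.2 a x]
  rcases h with h | h <;> simp [h]

theorem mut_apply_eq_add_of_row (R : AF X) {x v w : X} (hv : v ≠ x) (hw : w ≠ x) {d : ℤ}
    (hxv : R.1 x v = -d) (hxw : R.1 x w = d.sign) : (R.mut x).1 v w = R.1 v w + d := by
  rw [mut_apply_of_ne R hv hw, R.2 v x, hxv, hxw, neg_neg]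
  rcases lt_trichotomy d 0 with hd | rfl | hd
  · simp [Int.sign_eq_neg_one_of_neg hd, max_eq_left (neg_nonneg.2 hd.le)]
  · simp
  · simp [Int.sign_eq_one_of_pos hd, max_eq_right (neg_nonpos.2 hd.le)]

variable [DecidableEq X]

def setRow (R : AF X) (z : X) (c : X → ℤ) : AF X :=
  ⟨fun a b => if a = z then (if b = z then 0 else c b) else if b = z then -c a else R.1 a b, by
    intro a b
    by_cases ha : a = z <;> by_cases hb : b = z <;> simp [ha, hb, R.2 a b]⟩

theorem setRow_apply_of_ne (R : AF X) {z a b : X} (c : X → ℤ) (ha : a ≠ z) (hb : b ≠ z) :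
    (R.setRow z c).1 a b = R.1 a b := by
  simp [setRow, ha, hb]

theorem setRow_apply_left (R : AF X) {z b : X} (c : X → ℤ) (hb : b ≠ z) :
    (R.setRow z c).1 z b = c b := by
  simp [setRow, hb]

def HasExtensionProperty (R : AF X) : Prop :=
  ∀ (A : Finset X) (c : X → ℤ), ∃ x ∉ A, ∀ u ∈ A, R.1 x u = c u

theorem HasExtensionProperty.mut {R : AF X} (hR : R.HasExtensionProperty) (y : X) :
    (R.mut y).HasExtensionProperty := by
  intro A c
  -- `μ_y` turns the row `c'` of a vertex outside `insert y A` into `c`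
  let c' : X → ℤ := fun u =>
    if u = y then -c y else c u - (-c y * max (R.1 y u) 0 + max (c y) 0 * R.1 y u)
  obtain ⟨x, hxA, hx⟩ := hR (insert y A) c'
  have hxy : x ≠ y := fun h => hxA (h ▸ Finset.mem_insert_self y A)
  refine ⟨x, fun h => hxA (Finset.mem_insert_of_mem h), fun u hu => ?_⟩
  have hxy' : R.1 x y = -c y := by simpa [c'] using hx y (Finset.mem_insert_self y A)
  by_cases huy : u = y
  · subst huy
    rw [mut_apply_right, hxy', neg_neg]
  · have hxu' := hx u (Finset.mem_insert_of_mem hu)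
    simp only [c', if_neg huy] at hxu'
    rw [mut_apply_of_ne R hxy huy, hxu', hxy', neg_neg]
    ring

theorem HasExtensionProperty.mutUpTo {R : AF X} (hR : R.HasExtensionProperty) (i : ℕ → X) :
    ∀ n, (mutUpTo i R n).HasExtensionProperty
  | 0 => hR
  | n + 1 => (HasExtensionProperty.mutUpTo hR i n).mut (i (n + 1))

end AF

theorem exists_injOn_map_eq_of_universal {F : AF ℕ}
    (hU : ∀ (n : ℕ) (T : AF (Fin n)), EmbedsFin T F) (E : AF ℕ) (B : Finset ℕ) :
    ∃ φ : ℕ → ℕ, Set.InjOn φ B ∧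
      ∀ a ∈ B, ∀ b ∈ B, F.1 (φ a) (φ b) = E.1 a b := by
  let e := B.equivFin
  obtain ⟨f, hf, hfE⟩ := hU _ ⟨fun k l => E.1 (e.symm k) (e.symm l), fun _ _ => E.2 _ _⟩
  refine ⟨fun y => if h : y ∈ B then f (e ⟨y, h⟩) else 0, ?_, ?_⟩
  · intro a ha b hb hab
    simp only [Finset.mem_coe] at ha hb
    simp only [dif_pos ha, dif_pos hb] at hab
    simpa using e.injective (hf hab)
  · intro a ha b hb
    simpa [ha, hb] using hfE (e ⟨a, ha⟩) (e ⟨b, hb⟩)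

theorem hasExtensionProperty_of_homog {F : AF ℕ} (hH : Homog F)
    (hU : ∀ (n : ℕ) (T : AF (Fin n)), EmbedsFin T F) : F.HasExtensionProperty := by
  intro A c
  obtain ⟨z, hz⟩ := Infinite.exists_notMem_finset A
  have hne : ∀ u ∈ A, u ≠ z := fun u hu h => hz (h ▸ hu)
  obtain ⟨φ, hφ, hφE⟩ := exists_injOn_map_eq_of_universal hU (F.setRow z c) (insert z A)
  have hAB : Set.InjOn φ A := hφ.mono (Finset.coe_subset.2 (Finset.subset_insert z A))
  obtain ⟨Φ, hΦφ, hΦ⟩ := hH A (φ '' A) A.finite_toSet (A.finite_toSet.image φ) φ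
    hAB.bijOn_image fun a ha b hb => by
      rw [hφE a (Finset.mem_insert_of_mem ha) b (Finset.mem_insert_of_mem hb),
        AF.setRow_apply_of_ne F c (hne a ha) (hne b hb)]
  -- `Φ` moves `A` onto `φ '' A`, so its inverse moves the image of `z` next to `A`
  refine ⟨Φ.symm (φ z), fun hx => ?_, fun u hu => ?_⟩
  · have hφz : φ z = φ (Φ.symm (φ z)) := by rw [← hΦφ _ hx, Equiv.apply_symm_apply]
    exact hz (hφ (by simp) (by simp [hx]) hφz ▸ hx)
  · calc F.1 (Φ.symm (φ z)) u = F.1 (φ z) (φ u) := by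
          rw [← hΦ, Equiv.apply_symm_apply, hΦφ u hu]
      _ = c u := by
          rw [hφE z (by simp) u (by simp [hu]), AF.setRow_apply_left F c (hne u hu)]

theorem exists_adaptive_mutation_seq {X : Type*} (Q : AF X) (g : AF X → ℕ → X) :
    ∃ i : ℕ → X, ∀ n, i (n + 1) = g (mutUpTo i Q n) n := by
  let R : ℕ → AF X := fun n => Nat.rec Q (fun m Rm => AF.mut (g Rm m) Rm) n
  let i : ℕ → X := fun n => g (R n.pred) n.pred
  have hR : ∀ n, mutUpTo i Q n = R n := by
    intro n
    induction n with
    | zero => rfl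
    | succ m ih =>
      change AF.mut (g (R m) m) (mutUpTo i Q m) = AF.mut (g (R m) m) (R m)
      rw [ih]
  exact ⟨i, fun n => by rw [hR]; rfl⟩

section correctionRow

variable {X : Type*} [DecidableEq X] {v w : X} {d : ℤ}

def correctionRow (v w : X) (d : ℤ) (u : X) : ℤ :=
  if u = v then -d else if u = w then d.sign else 0

theorem correctionRow_left : correctionRow v w d v = -d := if_pos rfl

theorem correctionRow_right (h : w ≠ v) : correctionRow v w d w = d.sign := by
  rw [correctionRow, if_neg h, if_pos rfl]

theorem correctionRow_eq_zero {u : X} (hv : u ≠ v) (hw : u ≠ w) :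
    correctionRow v w d u = 0 := by
  rw [correctionRow, if_neg hv, if_neg hw]

end correctionRow

theorem mutUpTo_apply_eq_of_pair_lt {F Q : AF ℕ} {i : ℕ → ℕ} (hfresh : ∀ n, n < i (n + 1))
    (hrow : ∀ n, ∀ u ≤ n, (mutUpTo i F n).1 (i (n + 1)) u =
      correctionRow n.unpair.1 n.unpair.2
        (Q.1 n.unpair.1 n.unpair.2 - (mutUpTo i F n).1 n.unpair.1 n.unpair.2) u) :
    ∀ n a b, Nat.pair a b < n → (mutUpTo i F n).1 a b = Q.1 a b := by
  intro n
  induction n with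
  | zero => intro a b h; omega
  | succ m ih =>
    intro a b hab
    have hrowm := hrow m
    have hx := hfresh m
    set x := i (m + 1)
    set R := mutUpTo i F m
    set v := m.unpair.1
    set w := m.unpair.2
    have hR : mutUpTo i F (m + 1) = R.mut x := rfl
    have hv : v ≤ m := Nat.unpair_left_le m
    have hw : w ≤ m := Nat.unpair_right_le m
    have hfix : (R.mut x).1 v w = Q.1 v w := by
      by_cases hvw : v = w
      · rw [hvw, AF.apply_self, AF.apply_self]
      · have hxv : R.1 x v = -(Q.1 v w - R.1 v w) := by rw [hrowm v hv, correctionRow_left]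
        have hxw : R.1 x w = (Q.1 v w - R.1 v w).sign := by
          rw [hrowm w hw, correctionRow_right (Ne.symm hvw)]
        rw [AF.mut_apply_eq_add_of_row R (by omega) (by omega) hxv hxw]
        ring
    have ha : a ≤ m := by have := Nat.left_le_pair a b; omega
    have hb : b ≤ m := by have := Nat.right_le_pair a b; omega
    rw [hR]
    by_cases hcode : Nat.pair a b = m
    · have hab' : (a, b) = (v, w) := by rw [← Nat.unpair_pair a b, hcode]
      simp only [Prod.mk.injEq] at hab'
      rw [hab'.1, hab'.2, hfix]
    by_cases hdiag : a = b
    · rw [hdiag, AF.apply_self, AF.apply_self]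
    by_cases hswap : a = w ∧ b = v
    · rw [hswap.1, hswap.2, (R.mut x).2, hfix, ← Q.2]
    have hvw : ¬(a = v ∧ b = w) := fun h => hcode (by rw [h.1, h.2, Nat.pair_unpair])
    have hzero : R.1 x a = 0 ∨ R.1 x b = 0 := by
      rw [hrowm a ha, hrowm b hb]
      by_cases hav : a = v
      · exact Or.inr (correctionRow_eq_zero (by omega) (by omega))
      by_cases haw : a = w
      · exact Or.inr (correctionRow_eq_zero (by omega) (by omega))
      · exact Or.inl (correctionRow_eq_zero hav haw)
    rw [AF.mut_apply_eq_of_row_eq_zero R (by omega) (by omega) hzero, ih a b (by omega)]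

theorem tendsto_weakTop_of_eventually_eq {X ι : Type*} {l : Filter ι} {R : ι → AF X} {Q : AF X}
    (h : ∀ a b, ∀ᶠ n in l, (R n).1 a b = Q.1 a b) :
    Filter.Tendsto R l (@nhds _ (weakTop X) Q) := by
  rw [weakTop, TopologicalSpace.nhds_generateFrom]
  simp only [Filter.tendsto_iInf, Filter.tendsto_principal]
  rintro s ⟨hQs, Q', V, hV, rfl⟩
  have hV' : ∀ᶠ n in l, ∀ a ∈ V, ∀ b ∈ V, (R n).1 a b = Q.1 a b :=
    hV.eventually_all.2 fun a _ => hV.eventually_all.2 fun b _ => h a b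
  filter_upwards [hV'] with n hn
  change restrictFun V (R n).1 = restrictFun V Q'.1
  rw [← show restrictFun V Q.1 = restrictFun V Q'.1 from hQs]
  funext a b
  by_cases hab : a ∈ V ∧ b ∈ V <;> simp [restrictFun, hab, hn]

/-- If `F` is homogeneous and universal, then every `Q ∈ AF^ℕ` is the limit in the weak
topology of some infinite mutation sequence applied to `F`. -/
theorem fraisse_infinite_mutation (F : AF ℕ) (hH : Homog F)
    (hU : ∀ (n : ℕ) (T : AF (Fin n)), EmbedsFin T F) :
    ∀ Q : AF ℕ, ∃ i : ℕ → ℕ,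
      Filter.Tendsto (fun n => mutUpTo i F n) Filter.atTop (@nhds _ (weakTop ℕ) Q) := by
  intro Q
  choose! next hnext_fresh hnext_row using
    fun (R : AF ℕ) (n : ℕ) (hR : R.HasExtensionProperty) => hR (Finset.range (n + 1))
      (correctionRow n.unpair.1 n.unpair.2 (Q.1 n.unpair.1 n.unpair.2 - R.1 n.unpair.1 n.unpair.2))
  obtain ⟨i, hi⟩ := exists_adaptive_mutation_seq F next
  have hext := (hasExtensionProperty_of_homog hH hU).mutUpTo i
  have hcorrect := mutUpTo_apply_eq_of_pair_lt (F := F) (Q := Q) (i := i)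
    (fun n => by simpa [hi] using hnext_fresh _ n (hext n))
    fun n u hu => by
      rw [hi]
      exact hnext_row _ n (hext n) u (Finset.mem_range_succ_iff.2 hu)
  exact ⟨i, tendsto_weakTop_of_eventually_eq fun a b =>
    Filter.eventually_atTop.2 ⟨Nat.pair a b + 1, fun n hn => hcorrect n a b hn⟩⟩
end

section
/- Let Fin ⊆ AF be the subspace of finite quivers on ℕ with the subspace weak topology, and let ∼ be the equivalence relation on Fin where Q ∼ Q' iff Q' can be obtained from Q by applying a finite sequence of mutations followed by an isomorphism; give Fin/∼ the quotient topology. Let M' be the set of equivalence classes of abstract finite quivers (skew-symmetric functions {0,…,n-1} × {0,…,n-1} → ℤ, over all n ≥ 1) under mutation-equivalence and isomorphism, restricted to those classes represented by a quiver that either has no isolated vertices or is the one-vertex quiver; partially order M' by setting [P] ⪯ [R] iff P embeds as a full subquiver into some representative of [R], and give M' the Alexandrov topology whose open sets are the upward-closed sets. Then Fin/∼ is homeomorphic to M' via the map sending the class of Q ∈ Fin to the class of the restriction of Q to its support supp(Q) if supp(Q) ≠ ∅, and to the class of the one-vertex quiver if Q has no arrows. -/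
/-- The subspace `Fin ⊆ AF` of finite quivers on `ℕ`. -/
abbrev FinT := {Q : AF ℕ // Q ∈ FinSet ℕ}

/-- `Q ∼ Q'` iff `Q'` is obtained from `Q` by a finite mutation sequence followed by an
isomorphism (a relabeling of the vertices). -/
def finRel (Q Q' : FinT) : Prop := ∃ l : List ℕ, IsoAF (mutList Q.1 l) Q'.1

/-- The subspace weak topology on `Fin`. -/
instance : TopologicalSpace FinT :=
  TopologicalSpace.induced (Subtype.val : FinT → AF ℕ) (weakTop ℕ)

/-- The quotient topology on `Fin/∼` induced from the subspace weak topology on `Fin`. -/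
instance finQuotTop : TopologicalSpace (Quot finRel) :=
  TopologicalSpace.coinduced (Quot.mk finRel) inferInstance

/-- Abstract finite quivers: skew-symmetric functions on `{0, …, n}` over all `n`,
i.e. with at least one vertex. -/
abbrev AbsQ := Σ n : ℕ, AF (Fin (n + 1))

/-- Mutation-equivalence combined with isomorphism on abstract finite quivers. -/
def absEquiv (P R : AbsQ) : Prop :=
  ∃ (l : List (Fin (P.1 + 1))) (f : Fin (P.1 + 1) → Fin (R.1 + 1)),
    Function.Bijective f ∧ ∀ a b, R.2.1 (f a) (f b) = (mutList P.2 l).1 a b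

/-- `P` embeds into `S` as a full subquiver. -/
def embedsAbs (P S : AbsQ) : Prop :=
  ∃ f : Fin (P.1 + 1) → Fin (S.1 + 1), Function.Injective f ∧
    ∀ a b, S.2.1 (f a) (f b) = P.2.1 a b

/-- Either there are no isolated vertices, or it is the one-vertex quiver. -/
def GoodAbs (P : AbsQ) : Prop := (∀ a, ∃ b, P.2.1 a b ≠ 0) ∨ P.1 = 0

abbrev GoodQ := {P : AbsQ // GoodAbs P}

def relG (P R : GoodQ) : Prop := absEquiv P.1 R.1

/-- The mutation class space `M'`. -/
abbrev Msp := Quot relG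

/-- `[P] ⪯ [R]` on representatives: `P` embeds as a full subquiver into some
representative of the class of `R`. -/
def preRel (P R : GoodQ) : Prop := ∃ S : AbsQ, absEquiv R.1 S ∧ embedsAbs P.1 S

/-- The Alexandrov topology on `M'`: open sets are the upward-closed sets for `⪯`. -/
instance MTop : TopologicalSpace Msp where
  IsOpen O := ∀ P R : GoodQ, preRel P R → Quot.mk relG P ∈ O → Quot.mk relG R ∈ O
  isOpen_univ := fun _ _ _ _ => trivial
  isOpen_inter := fun s t hs ht P R h hm => ⟨hs P R h hm.1, ht P R h hm.2⟩
  isOpen_sUnion := fun S hS P R h hm => by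
    obtain ⟨t, htS, hmt⟩ := hm
    exact ⟨t, htS, hS t htS P R h hmt⟩

/-!
A finite quiver on `ℕ` is determined up to relabelling by its full subquiver on the support, and
mutations at vertices outside the support act trivially; so sending `Q` to the class of that
subquiver identifies `Fin/∼` with `M'` as sets. Every quiver in the basic neighbourhood
`U_{Q, supp Q}` contains `Q|_{supp Q}` as a full subquiver, which gives continuity. Conversely, if
`Q|_{supp Q}` embeds into a representative `S` of a larger class, then `S` can be placed on `ℕ`
extending `Q|_{supp Q}`, with its remaining vertices outside any prescribed finite set `V`; the
result lies in `U_{Q,V}`, so the image of an open set is upward closed.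
-/

open Function Set

theorem exists_equiv_comp_eq {A A' X X' : Type*} {f : A → X} (hf : Injective f) {f' : A' → X'}
    (hf' : Injective f') (e : X ≃ X') (h : range (e ∘ f) = range f') :
    ∃ g : A ≃ A', ∀ a, f' (g a) = e (f a) :=
  ⟨(Equiv.ofInjective _ (e.injective.comp hf)).trans
      ((Equiv.setCongr h).trans (Equiv.ofInjective f' hf').symm),
    fun a => by simp [Equiv.apply_ofInjective_symm]⟩

theorem exists_perm_comp_eq {A Y : Type*} [Finite A] [Infinite Y] {f f' : A → Y}
    (hf : Injective f) (hf' : Injective f') : ∃ e : Y ≃ Y, ∀ a, e (f a) = f' a := by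
  let emb : range f ↪ Y := (Equiv.ofInjective f hf).symm.toEmbedding.trans ⟨f', hf'⟩
  obtain ⟨e, he⟩ := Cardinal.extend_function_of_lt emb
    ((finite_range f).lt_aleph0.trans_le (Cardinal.aleph0_le_mk Y)) ⟨Equiv.refl Y⟩
  exact ⟨e, fun a => by simp [he ⟨f a, mem_range_self a⟩, emb]⟩

theorem exists_injective_notMem {B Y : Type*} [Finite B] [Infinite Y] {V : Set Y}
    (hV : V.Finite) : ∃ w : B → Y, Injective w ∧ ∀ b, w b ∉ V := by
  have : Infinite ↥Vᶜ := hV.infinite_compl.to_subtype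
  let w : B ↪ ↥Vᶜ := (Finite.equivFin B).toEmbedding.trans (Fin.valEmbedding.trans
    (Infinite.natEmbedding ↥Vᶜ))
  exact ⟨fun b => w b, Subtype.val_injective.comp w.injective, fun b => (w b).2⟩

theorem exists_injective_extend_notMem {A B Y : Type*} [Finite B] [Infinite Y] {emb : A → B}
    (hemb : Injective emb) {f : A → Y} (hf : Injective f) {V : Set Y} (hV : V.Finite)
    (hfV : range f ⊆ V) :
    ∃ j : B → Y, Injective j ∧ (∀ a, j (emb a) = f a) ∧ ∀ b ∉ range emb, j b ∉ V := by
  obtain ⟨w, hw, hwV⟩ := exists_injective_notMem (B := B) hV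
  have hext : ∀ a, extend emb f w (emb a) = f a := hemb.extend_apply f w
  have hext' : ∀ b ∉ range emb, extend emb f w b = w b := fun b hb => extend_apply' f w b hb
  refine ⟨extend emb f w, fun b b' hbb' => ?_, hext, fun b hb => (hext' b hb).symm ▸ hwV b⟩
  by_cases hb : b ∈ range emb <;> by_cases hb' : b' ∈ range emb
  · obtain ⟨a, rfl⟩ := hb
    obtain ⟨a', rfl⟩ := hb'
    rw [hext, hext] at hbb'
    rw [hf hbb']
  · obtain ⟨a, rfl⟩ := hb
    rw [hext, hext' b' hb'] at hbb'
    exact absurd (hbb' ▸ hfV (mem_range_self a)) (hwV b')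
  · obtain ⟨a', rfl⟩ := hb'
    rw [hext, hext' b hb] at hbb'
    exact absurd (hbb' ▸ hfV (mem_range_self a')) (hwV b)
  · rw [hext' b hb, hext' b' hb'] at hbb'
    exact hw hbb'

theorem Quot.exists_equiv_of_rel {α β : Type*} {r : α → α → Prop} {s : β → β → Prop}
    (hs : Equivalence s) (R : α → β → Prop) (hα : ∀ a, ∃ b, R a b) (hβ : ∀ b, ∃ a, R a b)
    (hR : ∀ a a' b b', R a b → R a' b' → (r a a' ↔ s b b')) :
    ∃ e : Quot r ≃ Quot s, ∀ a b, R a b → e (Quot.mk r a) = Quot.mk s b := by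
  choose φ hφ using hα
  let F : Quot r → Quot s := Quot.lift (fun a => Quot.mk s (φ a))
    fun a a' h => Quot.sound ((hR a a' _ _ (hφ a) (hφ a')).1 h)
  have hF : ∀ a b, R a b → F (Quot.mk r a) = Quot.mk s b := fun a b h =>
    Quot.sound ((hR a a _ _ (hφ a) h).1 ((hR a a _ _ (hφ a) (hφ a)).2 (hs.refl _)))
  refine ⟨Equiv.ofBijective F ⟨?_, ?_⟩, hF⟩
  · rintro ⟨a⟩ ⟨a'⟩ h
    exact Quot.sound ((hR a a' _ _ (hφ a) (hφ a')).2 (hs.eqvGen_iff.1 (Quot.eqvGen_exact h)))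
  · rintro ⟨b⟩
    obtain ⟨a, h⟩ := hβ b
    exact ⟨Quot.mk r a, hF a b h⟩

namespace AF

variable {X Y Z : Type*}

@[ext]
theorem ext {Q Q' : AF X} (h : ∀ a b, Q.1 a b = Q'.1 a b) : Q = Q' :=
  Subtype.ext (funext₂ h)

def support (Q : AF X) : Set X := {x | ∃ y, Q.1 x y ≠ 0}

variable {Q : AF X} {x y : X}

theorem apply_self_s19 (Q : AF X) (x : X) : Q.1 x x = 0 := by
  have := Q.2 x x; omega

theorem apply_eq_zero_of_left_notMem (hx : x ∉ Q.support) (y : X) : Q.1 x y = 0 :=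
  not_not.mp fun h => hx ⟨y, h⟩

theorem apply_eq_zero_of_right_notMem (hy : y ∉ Q.support) (x : X) : Q.1 x y = 0 := by
  rw [Q.2, apply_eq_zero_of_left_notMem hy, neg_zero]

theorem mem_support_right (h : Q.1 x y ≠ 0) : y ∈ Q.support :=
  ⟨x, by rwa [Q.2, neg_ne_zero]⟩

theorem support_eq_empty_of_subsingleton (h : Q.support.Subsingleton) : Q.support = ∅ := by
  refine h.eq_empty_or_singleton.resolve_right ?_
  rintro ⟨x, hx⟩
  obtain ⟨y, hy⟩ : x ∈ Q.support := hx ▸ rfl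
  have hyx : y = x := by simpa [hx] using mem_support_right hy
  exact hy (hyx ▸ Q.apply_self_s19 x)

theorem apply_eq_zero_of_support_eq_empty (h : Q.support = ∅) (x y : X) : Q.1 x y = 0 :=
  apply_eq_zero_of_left_notMem (h ▸ notMem_empty x) y

def comap (f : X → Y) (Q : AF Y) : AF X :=
  ⟨fun a b => Q.1 (f a) (f b), fun _ _ => Q.2 _ _⟩

@[simp]
theorem comap_apply (f : X → Y) (Q : AF Y) (a b : X) : (comap f Q).1 a b = Q.1 (f a) (f b) :=
  rfl

theorem comap_comap (f : X → Y) (g : Y → Z) (Q : AF Z) : comap f (comap g Q) = comap (g ∘ f) Q :=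
  rfl

theorem support_comap_of_surjective {f : X → Y} (hf : Surjective f) (Q : AF Y) :
    (comap f Q).support = f ⁻¹' Q.support := by
  ext a
  refine ⟨fun ⟨b, hb⟩ => ⟨f b, hb⟩, fun ⟨y, hy⟩ => ?_⟩
  obtain ⟨b, rfl⟩ := hf y
  exact ⟨b, hy⟩

theorem support_comap_eq_univ {f : Y → X} (hf : range f = Q.support) :
    (comap f Q).support = univ := by
  refine eq_univ_of_forall fun a => ?_
  obtain ⟨y, hy⟩ : f a ∈ Q.support := hf ▸ mem_range_self a
  obtain ⟨b, rfl⟩ : y ∈ range f := hf ▸ mem_support_right hy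
  exact ⟨b, hy⟩

theorem apply_eq_of_comap_eq {f : Y → X} {Q Q' : AF X} {V : Set X} (hQ : Q.support ∩ V ⊆ range f)
    (hQ' : Q'.support ∩ V ⊆ range f) (h : comap f Q = comap f Q') {x y : X} (hx : x ∈ V)
    (hy : y ∈ V) : Q.1 x y = Q'.1 x y := by
  by_cases hxf : x ∈ range f
  · by_cases hyf : y ∈ range f
    · obtain ⟨a, rfl⟩ := hxf
      obtain ⟨b, rfl⟩ := hyf
      exact congrArg (fun R : AF Y => R.1 a b) h
    · rw [apply_eq_zero_of_right_notMem (fun h => hyf (hQ ⟨h, hy⟩)),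
        apply_eq_zero_of_right_notMem (fun h => hyf (hQ' ⟨h, hy⟩))]
  · rw [apply_eq_zero_of_left_notMem (fun h => hxf (hQ ⟨h, hx⟩)),
      apply_eq_zero_of_left_notMem (fun h => hxf (hQ' ⟨h, hx⟩))]

theorem eq_of_comap_eq {f : Y → X} {Q Q' : AF X} (hQ : Q.support ⊆ range f)
    (hQ' : Q'.support ⊆ range f) (h : comap f Q = comap f Q') : Q = Q' :=
  AF.ext fun _ _ => apply_eq_of_comap_eq (V := univ) (inter_subset_left.trans hQ)
    (inter_subset_left.trans hQ') h trivial trivial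

open Classical in
/-- For injective `f`, the copy of `Q` on the image of `f`. -/
noncomputable def pushforward (f : X → Y) (Q : AF X) : AF Y :=
  ⟨fun y y' => if h : y ∈ range f ∧ y' ∈ range f then Q.1 h.1.choose h.2.choose else 0,
    fun y y' => by
      dsimp only
      by_cases h : y ∈ range f ∧ y' ∈ range f
      · rw [dif_pos h, dif_pos h.symm, Q.2]
      · rw [dif_neg h, dif_neg (h ∘ And.symm), neg_zero]⟩

theorem comap_pushforward {f : X → Y} (hf : Injective f) (Q : AF X) :
    comap f (pushforward f Q) = Q := by
  classical
  ext a b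
  have hchoose : ∀ c : X, (⟨c, rfl⟩ : f c ∈ range f).choose = c :=
    fun c => hf (⟨c, rfl⟩ : f c ∈ range f).choose_spec
  change dite _ _ _ = _
  rw [dif_pos ⟨mem_range_self a, mem_range_self b⟩, hchoose, hchoose]

theorem support_pushforward_subset (f : X → Y) (Q : AF X) :
    (pushforward f Q).support ⊆ range f := by
  rintro y ⟨y', hy⟩
  by_contra h
  exact hy (dif_neg fun h' => h h'.1)

theorem range_subset_support_pushforward {f : X → Y} (hf : Injective f) (hQ : Q.support = univ) :
    range f ⊆ (pushforward f Q).support := by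
  rintro _ ⟨a, rfl⟩
  obtain ⟨b, hb⟩ : a ∈ Q.support := hQ ▸ mem_univ a
  exact ⟨f b, by rwa [← comap_apply, comap_pushforward hf]⟩

theorem comap_mut {f : X → Y} (hf : Injective f) (x : X) (Q : AF Y) :
    comap f (AF.mut (f x) Q) = AF.mut x (comap f Q) := by
  ext a b
  change mutateFun (f x) Q.1 (f a) (f b) = mutateFun x (comap f Q).1 a b
  simp only [mutateFun, comap_apply]
  by_cases h : a = x ∨ b = x
  · rw [if_pos h, if_pos (by rwa [hf.eq_iff, hf.eq_iff])]
  · rw [if_neg h, if_neg (by rwa [hf.eq_iff, hf.eq_iff])]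

theorem mut_eq_self (hx : x ∉ Q.support) : AF.mut x Q = Q := by
  ext v w
  simp only [AF.mut, mutateFun, apply_eq_zero_of_left_notMem hx, apply_eq_zero_of_right_notMem hx]
  split_ifs with h
  · rcases h with rfl | rfl
    · rw [apply_eq_zero_of_left_notMem hx, neg_zero]
    · rw [apply_eq_zero_of_right_notMem hx, neg_zero]
  · simp

theorem mut_mut (x : X) (Q : AF X) : AF.mut x (AF.mut x Q) = Q := by
  ext v w
  simp only [AF.mut, mutateFun]
  by_cases h : v = x ∨ w = x
  · rw [if_pos h, if_pos h, neg_neg]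
  · simp only [if_neg h, true_or, or_true, if_true, neg_neg]
    have hsplit : ∀ t : ℤ, max t 0 - max (-t) 0 = t := fun t => by
      rcases le_total 0 t with h | h <;> simp [h]
    linear_combination Q.1 v x * hsplit (Q.1 x w) - Q.1 x w * hsplit (Q.1 v x)

theorem support_mut_subset (x : X) (Q : AF X) : (AF.mut x Q).support ⊆ Q.support := by
  intro a ha
  by_contra hQa
  obtain ⟨b, hb⟩ := ha
  apply hb
  simp only [AF.mut, mutateFun, apply_eq_zero_of_left_notMem hQa]
  split_ifs <;> simp

theorem support_mut (x : X) (Q : AF X) : (AF.mut x Q).support = Q.support :=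
  (support_mut_subset x Q).antisymm <| by
    simpa only [mut_mut] using support_mut_subset x (AF.mut x Q)

end AF

open AF

section MutList

variable {X Y : Type*}

theorem mutList_cons (Q : AF X) (x : X) (l : List X) :
    mutList Q (x :: l) = mutList (AF.mut x Q) l :=
  rfl

theorem mutList_append (Q : AF X) (l₁ l₂ : List X) :
    mutList Q (l₁ ++ l₂) = mutList (mutList Q l₁) l₂ :=
  List.foldl_append

theorem support_mutList (Q : AF X) (l : List X) : (mutList Q l).support = Q.support := by
  induction l generalizing Q with
  | nil => rfl
  | cons x l ih => rw [mutList_cons, ih, support_mut]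

theorem mutList_mutList_reverse (Q : AF X) (l : List X) : mutList (mutList Q l) l.reverse = Q := by
  induction l generalizing Q with
  | nil => rfl
  | cons x l ih =>
    rw [mutList_cons, List.reverse_cons, mutList_append, ih]
    exact mut_mut x Q

theorem comap_mutList {f : X → Y} (hf : Injective f) (Q : AF Y) (l : List X) :
    comap f (mutList Q (l.map f)) = mutList (comap f Q) l := by
  induction l generalizing Q with
  | nil => rfl
  | cons x l ih => rw [List.map_cons, mutList_cons, mutList_cons, ← comap_mut hf, ih]

/-- Mutations at vertices outside the support act trivially, so only those in `range f` matter. -/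
theorem exists_comap_mutList_eq {f : Y → X} (hf : Injective f) {Q : AF X}
    (hQ : Q.support ⊆ range f) (l : List X) :
    ∃ m : List Y, comap f (mutList Q l) = mutList (comap f Q) m := by
  induction l generalizing Q with
  | nil => exact ⟨[], rfl⟩
  | cons x l ih =>
    rw [mutList_cons]
    by_cases hx : x ∈ Q.support
    · obtain ⟨a, rfl⟩ := hQ hx
      obtain ⟨m, hm⟩ := ih (Q := AF.mut (f a) Q) (by rwa [support_mut])
      exact ⟨a :: m, by rw [hm, mutList_cons, comap_mut hf]⟩
    · rw [AF.mut_eq_self hx]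
      exact ih hQ

end MutList

theorem absEquiv_refl (P : AbsQ) : absEquiv P P :=
  ⟨[], id, bijective_id, fun _ _ => rfl⟩

theorem absEquiv_symm {P R : AbsQ} (h : absEquiv P R) : absEquiv R P := by
  obtain ⟨l, f, hf, hfR⟩ := h
  let e := Equiv.ofBijective f hf
  refine ⟨l.reverse.map f, e.symm, e.symm.bijective, fun a b => ?_⟩
  have key := comap_mutList hf.injective R.2 l.reverse
  rw [show comap f R.2 = mutList P.2 l from AF.ext hfR, mutList_mutList_reverse] at key
  rw [← key, comap_apply, show f (e.symm a) = a from e.apply_symm_apply a,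
    show f (e.symm b) = b from e.apply_symm_apply b]

theorem absEquiv_trans {P R S : AbsQ} (h₁ : absEquiv P R) (h₂ : absEquiv R S) : absEquiv P S := by
  obtain ⟨l, f, hf, hfR⟩ := h₁
  obtain ⟨m, g, hg, hgS⟩ := h₂
  let e := Equiv.ofBijective f hf
  refine ⟨l ++ m.map e.symm, g ∘ f, hg.comp hf, fun a b => ?_⟩
  have key := comap_mutList hf.injective R.2 (m.map e.symm)
  rw [show comap f R.2 = mutList P.2 l from AF.ext hfR, List.map_map,
    show f ∘ e.symm = id from funext e.apply_symm_apply, List.map_id] at key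
  rw [mutList_append, ← key, comap_apply, ← hgS]
  rfl

theorem relG_equivalence : Equivalence relG :=
  ⟨fun P => absEquiv_refl P.1, absEquiv_symm, absEquiv_trans⟩

theorem absEquiv.dim_eq {P R : AbsQ} (h : absEquiv P R) : P.1 = R.1 := by
  obtain ⟨-, f, hf, -⟩ := h
  simpa using Fintype.card_of_bijective hf

theorem absEquiv_of_dim_eq_zero {P R : AbsQ} (hP : P.1 = 0) (hR : R.1 = 0) : absEquiv P R := by
  have hsub : ∀ a b : Fin (P.1 + 1), a = b := fun a b => Fin.ext (by omega)
  refine ⟨[], finCongr (by omega), (finCongr _).bijective, fun a b => ?_⟩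
  rw [hsub a b, AF.apply_self_s19, AF.apply_self_s19]

theorem goodAbs_iff {P : AbsQ} : GoodAbs P ↔ P.2.support = univ ∨ P.1 = 0 := by
  rw [eq_univ_iff_forall]
  rfl

theorem GoodAbs.of_absEquiv {P R : AbsQ} (hP : GoodAbs P) (h : absEquiv P R) : GoodAbs R := by
  rw [goodAbs_iff] at hP ⊢
  refine hP.imp (fun hP => ?_) (fun hP => h.dim_eq ▸ hP)
  obtain ⟨l, f, hf, hfR⟩ := h
  rw [← univ_subset_iff, ← hf.surjective.range_eq, ← preimage_eq_univ_iff,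
    ← support_comap_of_surjective hf.surjective, show comap f R.2 = mutList P.2 l from AF.ext hfR,
    support_mutList, hP]

def IsSupportRestriction (Q : FinT) (P : GoodQ) : Prop :=
  (∃ f : Fin (P.1.1 + 1) → ℕ, Injective f ∧ range f = Q.1.support ∧
      ∀ a b, Q.1.1 (f a) (f b) = P.1.2.1 a b) ∨
    (Q.1.support = ∅ ∧ P.1.1 = 0)

theorem exists_isSupportRestriction (Q : FinT) : ∃ P, IsSupportRestriction Q P := by
  by_cases hQ : Q.1.support = ∅
  · exact ⟨⟨⟨0, ⟨fun _ _ => 0, fun _ _ => neg_zero.symm⟩⟩, Or.inr rfl⟩, Or.inr ⟨hQ, rfl⟩⟩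
  have : Finite Q.1.support := Q.2
  have hcard : Nat.card Q.1.support - 1 + 1 = Nat.card Q.1.support :=
    Nat.sub_add_cancel (Nat.card_pos_iff.2 ⟨nonempty_iff_ne_empty.2 hQ |>.to_subtype, this⟩)
  let f : Fin (Nat.card Q.1.support - 1 + 1) → ℕ :=
    Subtype.val ∘ (Finite.equivFin Q.1.support).symm ∘ finCongr hcard
  have hf : Injective f := Subtype.val_injective.comp ((Finite.equivFin _).symm.injective.comp
    (finCongr hcard).injective)
  have hfQ : range f = Q.1.support := by
    rw [range_comp, range_comp, (finCongr hcard).surjective.range_eq, image_univ,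
      (Finite.equivFin _).symm.surjective.range_eq, image_univ, Subtype.range_coe]
  exact ⟨⟨⟨_, comap f Q.1⟩, goodAbs_iff.2 (Or.inl (support_comap_eq_univ hfQ))⟩,
    Or.inl ⟨f, hf, hfQ, fun _ _ => rfl⟩⟩

theorem isSupportRestriction_pushforward (S : GoodQ) {j : Fin (S.1.1 + 1) → ℕ} (hj : Injective j) :
    IsSupportRestriction
      ⟨pushforward j S.1.2, (finite_range j).subset (support_pushforward_subset j _)⟩ S := by
  rcases goodAbs_iff.1 S.2 with hS | hS
  · refine Or.inl ⟨j, hj, (support_pushforward_subset j _).antisymm'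
      (range_subset_support_pushforward hj hS), fun a b => ?_⟩
    rw [← comap_apply, comap_pushforward hj]
  · have : Subsingleton (Fin (S.1.1 + 1)) := ⟨fun a b => Fin.ext (by omega)⟩
    exact Or.inr ⟨support_eq_empty_of_subsingleton
      ((subsingleton_range j).anti (support_pushforward_subset j _)), hS⟩

theorem exists_isSupportRestriction_of_goodQ (P : GoodQ) : ∃ Q, IsSupportRestriction Q P :=
  ⟨_, isSupportRestriction_pushforward P Fin.val_injective⟩

theorem IsSupportRestriction.support_eq_empty_iff {Q : FinT} {P : GoodQ}
    (h : IsSupportRestriction Q P) : Q.1.support = ∅ ↔ P.1.1 = 0 := by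
  rcases h with ⟨f, -, hfQ, -⟩ | ⟨hQ, hP⟩
  · refine iff_of_false (hfQ ▸ (range_nonempty f).ne_empty) fun hP => ?_
    have : Subsingleton (Fin (P.1.1 + 1)) := ⟨fun a b => Fin.ext (by omega)⟩
    exact (range_nonempty f).ne_empty
      (hfQ ▸ support_eq_empty_of_subsingleton (hfQ ▸ subsingleton_range f))
  · exact iff_of_true hQ hP

theorem finRel.support_eq_empty_iff {Q Q' : FinT} (h : finRel Q Q') :
    Q.1.support = ∅ ↔ Q'.1.support = ∅ := by
  obtain ⟨l, e, he⟩ := h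
  rw [← support_mutList Q.1 l, ← show comap e Q'.1 = mutList Q.1 l from AF.ext he,
    support_comap_of_surjective e.surjective, preimage_eq_empty_iff, e.range_eq_univ,
    disjoint_univ]

theorem finRel_of_support_eq_empty {Q Q' : FinT} (hQ : Q.1.support = ∅) (hQ' : Q'.1.support = ∅) :
    finRel Q Q' :=
  ⟨[], Equiv.refl ℕ, fun a b => by
    rw [apply_eq_zero_of_support_eq_empty hQ', mutList, List.foldl_nil,
      apply_eq_zero_of_support_eq_empty hQ]⟩

section RangeEqSupport

variable {Q Q' : FinT} {P P' : AbsQ} {f : Fin (P.1 + 1) → ℕ} {f' : Fin (P'.1 + 1) → ℕ}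

theorem absEquiv_of_finRel (hf : Injective f) (hfQ : range f = Q.1.support)
    (hfP : comap f Q.1 = P.2) (hf' : Injective f') (hfQ' : range f' = Q'.1.support)
    (hfP' : comap f' Q'.1 = P'.2) (h : finRel Q Q') : absEquiv P P' := by
  obtain ⟨l, e, he⟩ := h
  replace he : comap e Q'.1 = mutList Q.1 l := AF.ext he
  obtain ⟨m, hm⟩ := exists_comap_mutList_eq hf hfQ.superset l
  have hrange : range (e ∘ f) = range f' := by
    rw [range_comp, hfQ, hfQ', ← support_mutList Q.1 l, ← he,
      support_comap_of_surjective e.surjective, e.image_preimage]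
  obtain ⟨g, hg⟩ := exists_equiv_comp_eq hf hf' e hrange
  refine ⟨m, g, g.bijective, fun a b => ?_⟩
  rw [← hfP', comap_apply, hg, hg, ← hfP, ← hm, comap_apply, ← he, comap_apply]

theorem finRel_of_absEquiv (hf : Injective f) (hfQ : range f = Q.1.support)
    (hfP : comap f Q.1 = P.2) (hf' : Injective f') (hfQ' : range f' = Q'.1.support)
    (hfP' : comap f' Q'.1 = P'.2) (h : absEquiv P P') : finRel Q Q' := by
  obtain ⟨l, g, hg, hgP⟩ := h
  obtain ⟨e, he⟩ := exists_perm_comp_eq hf (hf'.comp hg.injective)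
  have hrange : e ⁻¹' range f' = range f := by
    rw [← hg.surjective.range_comp, ← show e ∘ f = f' ∘ g from funext he, range_comp,
      e.preimage_image]
  suffices comap e Q'.1 = mutList Q.1 (l.map f) from
    ⟨l.map f, e, fun x y => congrArg (fun R : AF ℕ => R.1 x y) this⟩
  refine eq_of_comap_eq (f := f) ?_ (by rw [support_mutList, hfQ]) ?_
  · rw [support_comap_of_surjective e.surjective, ← hfQ', hrange]
  · rw [comap_mutList hf, hfP, ← show comap g P'.2 = mutList P.2 l from AF.ext hgP, ← hfP',
      comap_comap, comap_comap, show e ∘ f = f' ∘ g from funext he]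

end RangeEqSupport

theorem IsSupportRestriction.finRel_iff_relG {Q Q' : FinT} {P P' : GoodQ}
    (h : IsSupportRestriction Q P) (h' : IsSupportRestriction Q' P') : finRel Q Q' ↔ relG P P' := by
  have hQ := h.support_eq_empty_iff
  have hQ' := h'.support_eq_empty_iff
  rcases h with ⟨f, hf, hfQ, hfP⟩ | ⟨hQe, hP⟩ <;>
    rcases h' with ⟨f', hf', hfQ', hfP'⟩ | ⟨hQe', hP'⟩
  · exact ⟨absEquiv_of_finRel hf hfQ (AF.ext hfP) hf' hfQ' (AF.ext hfP'),
      finRel_of_absEquiv hf hfQ (AF.ext hfP) hf' hfQ' (AF.ext hfP')⟩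
  · have hQne : Q.1.support ≠ ∅ := hfQ ▸ (range_nonempty f).ne_empty
    exact iff_of_false (fun hr => hQne (hr.support_eq_empty_iff.2 hQe'))
      (fun hr => hQne (hQ.2 (hr.dim_eq.trans hP')))
  · have hQne : Q'.1.support ≠ ∅ := hfQ' ▸ (range_nonempty f').ne_empty
    exact iff_of_false (fun hr => hQne (hr.support_eq_empty_iff.1 hQe))
      (fun hr => hQne (hQ'.2 (hr.dim_eq.symm.trans hP)))
  · exact iff_of_true (finRel_of_support_eq_empty hQe hQe') (absEquiv_of_dim_eq_zero hP hP')

theorem IsSupportRestriction.embedsAbs_of_eqOn_support {Q Q' : FinT} {P P' : GoodQ}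
    (h : IsSupportRestriction Q P) (h' : IsSupportRestriction Q' P')
    (hQQ' : ∀ a ∈ Q.1.support, ∀ b ∈ Q.1.support, Q'.1.1 a b = Q.1.1 a b) :
    embedsAbs P.1 P'.1 := by
  rcases h with ⟨f, hf, hfQ, hfP⟩ | ⟨-, hP⟩
  · have hsupp : Q.1.support ⊆ Q'.1.support := fun x ⟨y, hy⟩ =>
      ⟨y, hQQ' x ⟨y, hy⟩ y (mem_support_right hy) ▸ hy⟩
    rcases h' with ⟨f', hf', hfQ', hfP'⟩ | ⟨hQ', -⟩
    · obtain ⟨g, rfl⟩ := range_subset_range_iff_exists_comp.1 (hfQ ▸ hfQ' ▸ hsupp)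
      refine ⟨g, hf.of_comp, fun a b => ?_⟩
      rw [← hfP', ← hfP, hQQ' _ (hfQ ▸ mem_range_self a) _ (hfQ ▸ mem_range_self b)]
      rfl
    · exact absurd (subset_eq_empty (hfQ ▸ hsupp) hQ') (range_nonempty f).ne_empty
  · refine ⟨fun _ => 0, fun a b _ => Fin.ext (by omega), fun a b => ?_⟩
    rw [show a = b from Fin.ext (by omega), AF.apply_self_s19, AF.apply_self_s19]

/-- The vertices of `B` outside `emb` are sent outside `V`, so on `V` the pushforward of `S` only
shows its full subquiver `comap emb S = comap f Q`. -/
theorem exists_injective_pushforward_eqOn {A B : Type*} [Finite B] {emb : A → B}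
    (hemb : Injective emb) {f : A → ℕ} (hf : Injective f) {Q : AF ℕ} (hfQ : Q.support ⊆ range f)
    {S : AF B} (hS : comap emb S = comap f Q) {V : Set ℕ} (hV : V.Finite) :
    ∃ j : B → ℕ, Injective j ∧ ∀ x ∈ V, ∀ y ∈ V, (pushforward j S).1 x y = Q.1 x y := by
  have : Finite A := Finite.of_injective emb hemb
  obtain ⟨j, hj, hjf, hjV⟩ :=
    exists_injective_extend_notMem hemb hf (hV.union (finite_range f)) subset_union_right
  have hjemb : j ∘ emb = f := funext hjf
  refine ⟨j, hj, fun x hx y hy => apply_eq_of_comap_eq (f := j ∘ emb) ?_ ?_ ?_ hx hy⟩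
  · rintro _ ⟨hx, hxV⟩
    obtain ⟨b, rfl⟩ := support_pushforward_subset j S hx
    by_cases hb : b ∈ range emb
    · obtain ⟨a, rfl⟩ := hb
      exact mem_range_self a
    · exact absurd (Or.inl hxV) (hjV b hb)
  · exact hjemb ▸ inter_subset_left.trans hfQ
  · rw [← comap_comap, comap_pushforward hj, hS, hjemb]

theorem IsSupportRestriction.exists_eqOn_of_embedsAbs {Q : FinT} {P S : GoodQ}
    (h : IsSupportRestriction Q P) (hPS : embedsAbs P.1 S.1) {V : Set ℕ} (hV : V.Finite) :
    ∃ Q' : FinT, IsSupportRestriction Q' S ∧ ∀ a ∈ V, ∀ b ∈ V, Q'.1.1 a b = Q.1.1 a b := by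
  obtain ⟨emb, hemb, hembP⟩ := hPS
  obtain ⟨j, hj, hjQ⟩ : ∃ j : Fin (S.1.1 + 1) → ℕ, Injective j ∧
      ∀ x ∈ V, ∀ y ∈ V, (pushforward j S.1.2).1 x y = Q.1.1 x y := by
    rcases h with ⟨f, hf, hfQ, hfP⟩ | ⟨hQe, -⟩
    · exact exists_injective_pushforward_eqOn hemb hf hfQ.superset
        (AF.ext fun a b => (hembP a b).trans (hfP a b).symm) hV
    · obtain ⟨j, hj, hjV⟩ := exists_injective_notMem (B := Fin (S.1.1 + 1)) hV
      refine ⟨j, hj, fun x hx y _ => ?_⟩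
      rw [apply_eq_zero_of_support_eq_empty hQe, apply_eq_zero_of_left_notMem]
      rintro hxS
      obtain ⟨b, rfl⟩ := support_pushforward_subset j _ hxS
      exact hjV b hx
  exact ⟨_, isSupportRestriction_pushforward S hj, hjQ⟩

theorem mem_Uset_iff {X : Type*} {Q Q' : AF X} {V : Set X} :
    Q' ∈ Uset Q V ↔ ∀ a ∈ V, ∀ b ∈ V, Q'.1 a b = Q.1 a b := by
  simp only [Uset, funext_iff, restrictFun]
  refine ⟨fun h a ha b hb => by simpa [ha, hb] using h a b, fun h a b => ?_⟩
  split_ifs with hab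
  exacts [h a hab.1 b hab.2, rfl]

theorem Uset_eq_of_mem {X : Type*} {Q Q' : AF X} {V : Set X} (h : Q' ∈ Uset Q V) :
    Uset Q' V = Uset Q V := by
  unfold Uset
  rw [h]

theorem Uset_anti {X : Type*} (Q : AF X) {V W : Set X} (h : V ⊆ W) : Uset Q W ⊆ Uset Q V :=
  fun _ hQ' => mem_Uset_iff.2 fun a ha b hb => mem_Uset_iff.1 hQ' a (h ha) b (h hb)

theorem isTopologicalBasis_UBasis (X : Type*) :
    @TopologicalSpace.IsTopologicalBasis (AF X) (weakTop X) (UBasis X) := by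
  let := weakTop X
  refine ⟨?_, ?_, rfl⟩
  · rintro _ ⟨Q₁, V₁, hV₁, rfl⟩ _ ⟨Q₂, V₂, hV₂, rfl⟩ Q ⟨hQ₁, hQ₂⟩
    refine ⟨Uset Q (V₁ ∪ V₂), ⟨Q, _, hV₁.union hV₂, rfl⟩, mem_Uset_iff.2 fun _ _ _ _ => rfl, ?_⟩
    rw [← Uset_eq_of_mem hQ₁, ← Uset_eq_of_mem hQ₂]
    exact subset_inter (Uset_anti Q subset_union_left) (Uset_anti Q subset_union_right)
  · exact eq_univ_of_forall fun Q =>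
      ⟨Uset Q ∅, ⟨Q, ∅, finite_empty, rfl⟩, mem_Uset_iff.2 fun _ _ _ _ => rfl⟩

theorem isOpen_finT_iff {T : Set FinT} :
    IsOpen T ↔ ∀ Q ∈ T, ∃ V : Set ℕ, V.Finite ∧
      ∀ Q' : FinT, (∀ a ∈ V, ∀ b ∈ V, Q'.1.1 a b = Q.1.1 a b) → Q' ∈ T := by
  rw [(@TopologicalSpace.IsTopologicalBasis.induced _ _ (weakTop ℕ) Subtype.val _
    (isTopologicalBasis_UBasis ℕ)).isOpen_iff]
  refine forall₂_congr fun Q _ => ⟨?_, ?_⟩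
  · rintro ⟨_, ⟨_, ⟨Q₀, V, hV, rfl⟩, rfl⟩, hQ, hT⟩
    exact ⟨V, hV, fun Q' hQ' => hT (Uset_eq_of_mem hQ ▸ mem_Uset_iff.2 hQ')⟩
  · rintro ⟨V, hV, hT⟩
    exact ⟨_, ⟨_, ⟨Q.1, V, hV, rfl⟩, rfl⟩, mem_Uset_iff.2 fun _ _ _ _ => rfl,
      fun Q' hQ' => hT Q' (mem_Uset_iff.1 hQ')⟩

theorem continuous_of_isSupportRestriction {e : Quot finRel → Msp}
    (he : ∀ Q P, IsSupportRestriction Q P → e (Quot.mk finRel Q) = Quot.mk relG P) :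
    Continuous e := by
  refine continuous_coinduced_dom.2 (continuous_def.2 fun O hO => isOpen_finT_iff.2 fun Q hQ => ?_)
  obtain ⟨P, hP⟩ := exists_isSupportRestriction Q
  refine ⟨Q.1.support, Q.2, fun Q' hQ' => ?_⟩
  obtain ⟨P', hP'⟩ := exists_isSupportRestriction Q'
  have hPP' : preRel P P' := ⟨P'.1, absEquiv_refl _, hP.embedsAbs_of_eqOn_support hP' hQ'⟩
  simp only [mem_preimage, comp_apply, he _ _ hP, he _ _ hP'] at hQ ⊢
  exact hO P P' hPP' hQ

theorem isOpenMap_of_isSupportRestriction {e : Quot finRel → Msp}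
    (he : ∀ Q P, IsSupportRestriction Q P → e (Quot.mk finRel Q) = Quot.mk relG P)
    (he_inj : Injective e) : IsOpenMap e := by
  rintro O hO Pg Rg ⟨S, hRS, hPS⟩ ⟨q, hq, hqP⟩
  obtain ⟨Q, hQ⟩ := exists_isSupportRestriction_of_goodQ Pg
  have hQO : Quot.mk finRel Q ∈ O := he_inj (hqP.trans (he Q Pg hQ).symm) ▸ hq
  obtain ⟨V, hV, hVO⟩ := isOpen_finT_iff.1 (isOpen_coinduced.1 hO) Q hQO
  obtain ⟨Q', hQ'S, hQ'V⟩ := hQ.exists_eqOn_of_embedsAbs (S := ⟨S, Rg.2.of_absEquiv hRS⟩) hPS hV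
  exact ⟨Quot.mk finRel Q', hVO Q' hQ'V, (he Q' _ hQ'S).trans (Quot.sound (absEquiv_symm hRS))⟩

/-- `Fin/∼` is homeomorphic to `M'`, via the map sending the class of `Q` to the class of
the restriction of `Q` to its support when the support is nonempty, and to the class of
the one-vertex quiver when `Q` has no arrows. -/
theorem fin_quotient_homeomorphic_to_mutation_class_space :
    ∃ H : Quot finRel ≃ₜ Msp,
      ∀ (Q : FinT) (P : GoodQ),
        ((∃ f : Fin (P.1.1 + 1) → ℕ, Function.Injective f ∧
            Set.range f = {x : ℕ | ∃ y, Q.1.1 x y ≠ 0} ∧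
            ∀ a b, Q.1.1 (f a) (f b) = P.1.2.1 a b) ∨
          ({x : ℕ | ∃ y, Q.1.1 x y ≠ 0} = ∅ ∧ P.1.1 = 0)) →
        H (Quot.mk finRel Q) = Quot.mk relG P := by
  obtain ⟨e, he⟩ := Quot.exists_equiv_of_rel relG_equivalence IsSupportRestriction
    exists_isSupportRestriction exists_isSupportRestriction_of_goodQ
    fun _ _ _ _ => IsSupportRestriction.finRel_iff_relG
  exact ⟨e.toHomeomorphOfContinuousOpen (continuous_of_isSupportRestriction he)
    (isOpenMap_of_isSupportRestriction he e.injective), he⟩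
end
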